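/- arXiv:1309.6141 — 9 statements merged into one kernel-verified Lean document; each statement's English description precedes it below -/
import Mathlib

section
/- Let σ be a random time, t ≥ 0, and ξ a P-integrable random variable. Then P-almost surely, E^P[ξ·1_{σ>t} | G_t] = 1_{σ>t} · E^P[ξ·1_{σ>t} | F_t] / Z_t, where the quotient is interpreted as 0 on the set {Z_t = 0} (the set {σ > t} ∩ {Z_t = 0} is P-null). -/
/-!
Write `A = {σ > t}`. Every generator `{σ > r}`, `r ≤ t`, of `𝒢 t` contains `A`, so the trace
of `𝒢 t` on `A` is the trace of `ℱ t`: each `s ∈ 𝒢 t` satisfies `s ∩ A = F ∩ A` for some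
`F ∈ ℱ t`. Hence the candidate `1_A · E[ξ 1_A | ℱ t] / Z` need only be tested against sets
`F ∩ A`, and there the defining property of `Z` turns `E[φ 1_A]` into `E[φ Z]` for
`ℱ t`-measurable `φ`; with `φ = 1_F · E[ξ 1_A | ℱ t] / Z` the factor `Z` cancels except on
`{Z = 0}`, which meets `A` only in a null set because `∫_{Z ≤ 0} Z = P(A ∩ {Z ≤ 0})`.
Integrability of the candidate comes from the same identity for nonnegative `φ`, i.e. from
`P(· ∩ A) = Z · P` on `ℱ t`.
-/

open MeasureTheory

theorem MeasurableSpace.exists_inter_eq_of_measurableSet_sup_generateFrom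
    {Ω : Type*} {mF : MeasurableSpace Ω} {A : Set Ω} {C : Set (Set Ω)} (hC : ∀ c ∈ C, A ⊆ c)
    {s : Set Ω} (hs : MeasurableSet[mF ⊔ generateFrom C] s) :
    ∃ F, MeasurableSet[mF] F ∧ s ∩ A = F ∩ A := by
  have hle : (mF ⊔ generateFrom C).comap ((↑) : A → Ω) ≤ mF.comap (↑) := by
    rw [comap_sup, comap_generateFrom]
    refine sup_le le_rfl (generateFrom_le ?_)
    rintro _ ⟨c, hc, rfl⟩
    rw [Set.preimage_eq_univ_iff.mpr (by simpa using hC c hc)]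
    exact MeasurableSet.univ
  obtain ⟨F, hF, hFs⟩ := hle _ ⟨s, hs, rfl⟩
  refine ⟨F, hF, ?_⟩
  rw [Set.inter_comm, Set.inter_comm F]
  exact (Subtype.preimage_coe_eq_preimage_coe_iff.mp hFs).symm

namespace AzemaSupermartingale

variable {Ω : Type*} {mF m : MeasurableSpace Ω} {P : Measure Ω}
  {A : Set Ω} {Z : Ω → ℝ}

lemma ae_nonneg (hZ : Z =ᵐ[P] P[A.indicator 1 | mF]) : 0 ≤ᵐ[P] Z := by
  filter_upwards [hZ, condExp_nonneg (m := mF) (μ := P) (Filter.Eventually.of_forall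
    (Set.indicator_nonneg fun _ _ => zero_le_one (α := ℝ)))] with ω hω hnn
  rw [hω]
  exact hnn

variable [IsFiniteMeasure P]

lemma setIntegral_eq_measureReal_inter (hm : mF ≤ m) (hA : MeasurableSet[m] A)
    (hZ : Z =ᵐ[P] P[A.indicator 1 | mF]) {s : Set Ω} (hs : MeasurableSet[mF] s) :
    ∫ ω in s, Z ω ∂P = P.real (s ∩ A) := by
  rw [setIntegral_congr_ae (hm s hs) (hZ.mono fun ω hω _ => hω),
    setIntegral_condExp hm ((integrable_const 1).indicator hA) hs, integral_indicator_one hA,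
    measureReal_restrict_apply hA, Set.inter_comm]

lemma measure_inter_nonpos_eq_zero (hm : mF ≤ m) (hA : MeasurableSet[m] A)
    (hZmeas : StronglyMeasurable[mF] Z) (hZ : Z =ᵐ[P] P[A.indicator 1 | mF]) :
    P (A ∩ {ω | Z ω ≤ 0}) = 0 := by
  have hs : MeasurableSet[mF] {ω | Z ω ≤ 0} := hZmeas.measurable measurableSet_Iic
  have hreal : P.real ({ω | Z ω ≤ 0} ∩ A) ≤ 0 := by
    rw [← setIntegral_eq_measureReal_inter hm hA hZ hs]
    exact setIntegral_nonpos (hm _ hs) fun _ hω => hω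
  rw [Set.inter_comm, ← measureReal_eq_zero_iff]
  exact hreal.antisymm measureReal_nonneg

lemma trim_restrict_eq_withDensity (hm : mF ≤ m) (hA : MeasurableSet[m] A)
    (hZmeas : StronglyMeasurable[mF] Z) (hZ : Z =ᵐ[P] P[A.indicator 1 | mF]) :
    (P.restrict A).trim hm = (P.trim hm).withDensity fun ω => ENNReal.ofReal (Z ω) := by
  have hZ' : Measurable[mF] fun ω => ENNReal.ofReal (Z ω) :=
    ENNReal.measurable_ofReal.comp hZmeas.measurable
  refine @Measure.ext Ω mF _ _ fun s hs => ?_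
  rw [trim_measurableSet_eq hm hs, Measure.restrict_apply (hm s hs), withDensity_apply _ hs,
    setLIntegral_trim hm hZ' hs,
    ← ofReal_integral_eq_lintegral_ofReal (integrable_condExp.congr hZ.symm).restrict
      (ae_restrict_of_ae (ae_nonneg hZ)),
    setIntegral_eq_measureReal_inter hm hA hZ hs, ofReal_measureReal]

lemma setLIntegral_eq_lintegral_mul_ofReal (hm : mF ≤ m)
    (hA : MeasurableSet[m] A) (hZmeas : StronglyMeasurable[mF] Z)
    (hZ : Z =ᵐ[P] P[A.indicator 1 | mF]) {ψ : Ω → ENNReal} (hψ : Measurable[mF] ψ) :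
    ∫⁻ ω in A, ψ ω ∂P = ∫⁻ ω, ψ ω * ENNReal.ofReal (Z ω) ∂P := by
  have hZ' : Measurable[mF] fun ω => ENNReal.ofReal (Z ω) :=
    ENNReal.measurable_ofReal.comp hZmeas.measurable
  rw [← lintegral_trim hm hψ, trim_restrict_eq_withDensity hm hA hZmeas hZ,
    lintegral_withDensity_eq_lintegral_mul _ hZ' hψ, lintegral_trim hm (hZ'.mul hψ)]
  simp_rw [Pi.mul_apply, mul_comm]

lemma integrableOn_div (hm : mF ≤ m) (hA : MeasurableSet[m] A)
    (hZmeas : StronglyMeasurable[mF] Z) (hZ : Z =ᵐ[P] P[A.indicator 1 | mF]) {h : Ω → ℝ}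
    (hh_meas : StronglyMeasurable[mF] h) (hh : Integrable h P) :
    IntegrableOn (fun ω => h ω / Z ω) A P := by
  have hq : StronglyMeasurable[mF] fun ω => h ω / Z ω := hh_meas.div hZmeas
  refine ⟨(hq.mono hm).aestronglyMeasurable, ?_⟩
  have hbound : ∀ᵐ ω ∂P, ‖h ω / Z ω‖ₑ * ENNReal.ofReal (Z ω) ≤ ‖h ω‖ₑ := by
    filter_upwards [ae_nonneg hZ] with ω hω
    rcases hω.eq_or_lt with hz | hz
    · simp [← hz]
    · rw [← Real.enorm_of_nonneg hz.le, ← enorm_mul, div_mul_cancel₀ _ hz.ne']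
  calc ∫⁻ ω in A, ‖h ω / Z ω‖ₑ ∂P
      = ∫⁻ ω, ‖h ω / Z ω‖ₑ * ENNReal.ofReal (Z ω) ∂P :=
        setLIntegral_eq_lintegral_mul_ofReal hm hA hZmeas hZ
          (measurable_enorm.comp hq.measurable)
    _ ≤ ∫⁻ ω, ‖h ω‖ₑ ∂P := lintegral_mono_ae hbound
    _ < ⊤ := hh.2

lemma setIntegral_eq_integral_mul (hm : mF ≤ m) (hA : MeasurableSet[m] A)
    (hZ : Z =ᵐ[P] P[A.indicator 1 | mF]) {φ : Ω → ℝ} (hφ : StronglyMeasurable[mF] φ)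
    (hφA : IntegrableOn φ A P) :
    ∫ ω in A, φ ω ∂P = ∫ ω, φ ω * Z ω ∂P := by
  have hprod : (fun ω => φ ω * A.indicator 1 ω) = A.indicator φ := by
    ext ω
    by_cases hω : ω ∈ A <;> simp [hω]
  have hpull := condExp_mul_of_stronglyMeasurable_left hφ
    (hprod ▸ (integrable_indicator_iff hA).mpr hφA) ((integrable_const (1 : ℝ)).indicator hA)
  calc ∫ ω in A, φ ω ∂P = ∫ ω, φ ω * A.indicator 1 ω ∂P := by
        rw [hprod, integral_indicator hA]
    _ = ∫ ω, P[fun ω => φ ω * A.indicator 1 ω | mF] ω ∂P := (integral_condExp hm).symm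
    _ = ∫ ω, φ ω * Z ω ∂P := by
        refine integral_congr_ae ?_
        filter_upwards [hpull, hZ] with ω hpull hZ
        exact hpull.trans (congrArg (φ ω * ·) hZ.symm)

lemma setIntegral_inter_condExp_indicator_div (hm : mF ≤ m)
    (hA : MeasurableSet[m] A) (hZmeas : StronglyMeasurable[mF] Z)
    (hZ : Z =ᵐ[P] P[A.indicator 1 | mF]) {ξ : Ω → ℝ} (hξ : Integrable ξ P) {F : Set Ω}
    (hF : MeasurableSet[mF] F) :
    ∫ ω in F ∩ A, P[A.indicator ξ | mF] ω / Z ω ∂P = ∫ ω in F ∩ A, ξ ω ∂P := by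
  set h := P[A.indicator ξ | mF]
  have hq : StronglyMeasurable[mF] fun ω => h ω / Z ω := stronglyMeasurable_condExp.div hZmeas
  have hZ0 : MeasurableSet[mF] {ω | Z ω ≠ 0} :=
    (hZmeas.measurable (measurableSet_singleton 0)).compl
  have hnull : (F ∩ {ω | Z ω ≠ 0} ∩ A : Set Ω) =ᵐ[P] (F ∩ A : Set Ω) := by
    refine Filter.eventuallyEq_set.mpr ?_
    filter_upwards [measure_eq_zero_iff_ae_notMem.mp
      (measure_inter_nonpos_eq_zero hm hA hZmeas hZ)] with ω hω
    constructor
    · rintro ⟨⟨hωF, -⟩, hωA⟩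
      exact ⟨hωF, hωA⟩
    · rintro ⟨hωF, hωA⟩
      exact ⟨⟨hωF, fun hz => hω ⟨hωA, hz.le⟩⟩, hωA⟩
  calc ∫ ω in F ∩ A, h ω / Z ω ∂P = ∫ ω in A, F.indicator (fun ω => h ω / Z ω) ω ∂P := by
        rw [setIntegral_indicator (hm F hF), Set.inter_comm]
    _ = ∫ ω, F.indicator (fun ω => h ω / Z ω) ω * Z ω ∂P :=
        setIntegral_eq_integral_mul hm hA hZ (hq.indicator hF) <|
          (integrableOn_div hm hA hZmeas hZ stronglyMeasurable_condExp
            integrable_condExp).indicator (hm F hF)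
    _ = ∫ ω, (F ∩ {ω | Z ω ≠ 0}).indicator h ω ∂P := by
        congr 1
        ext ω
        by_cases hωF : ω ∈ F <;> by_cases hz : Z ω = 0 <;> simp [hωF, hz]
    _ = ∫ ω in F ∩ {ω | Z ω ≠ 0}, A.indicator ξ ω ∂P := by
        rw [integral_indicator (hm _ (hF.inter hZ0)),
          setIntegral_condExp hm (hξ.indicator hA) (hF.inter hZ0)]
    _ = ∫ ω in F ∩ A, ξ ω ∂P := by
        rw [setIntegral_indicator hA, setIntegral_congr_set hnull]

theorem condExp_indicator_eq_indicator_div {𝒢 : MeasurableSpace Ω}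
    (hF𝒢 : mF ≤ 𝒢) (h𝒢 : 𝒢 ≤ m) (hA : MeasurableSet[𝒢] A)
    (htrace : ∀ s, MeasurableSet[𝒢] s → ∃ F, MeasurableSet[mF] F ∧ s ∩ A = F ∩ A)
    (hZmeas : StronglyMeasurable[mF] Z) (hZ : Z =ᵐ[P] P[A.indicator 1 | mF]) {ξ : Ω → ℝ}
    (hξ : Integrable ξ P) :
    P[A.indicator ξ | 𝒢] =ᵐ[P] A.indicator fun ω => P[A.indicator ξ | mF] ω / Z ω := by
  have hm := hF𝒢.trans h𝒢
  have hAm := h𝒢 A hA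
  have hq : StronglyMeasurable[mF] fun ω => P[A.indicator ξ | mF] ω / Z ω :=
    stronglyMeasurable_condExp.div hZmeas
  have hint := (integrable_indicator_iff hAm).mpr
    (integrableOn_div hm hAm hZmeas hZ stronglyMeasurable_condExp
      (integrable_condExp (f := A.indicator ξ)))
  refine (ae_eq_condExp_of_forall_setIntegral_eq h𝒢 (hξ.indicator hAm)
    (fun s _ _ => hint.integrableOn) (fun s hs _ => ?_)
    ((hq.mono hF𝒢).indicator hA).aestronglyMeasurable).symm
  obtain ⟨F, hF, hsA⟩ := htrace s hs
  rw [setIntegral_indicator hAm, setIntegral_indicator hAm, hsA,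
    setIntegral_inter_condExp_indicator_div hm hAm hZmeas hZ hξ hF]

end AzemaSupermartingale

/-- Let `σ` be a random time, `t ≥ 0`, and `ξ` a `P`-integrable random
variable. Then `P`-almost surely,
`E[ξ·1_{σ>t} | 𝒢 t] = 1_{σ>t} · E[ξ·1_{σ>t} | ℱ t] / Z t`,
where `Z t` is an `ℱ t`-measurable version of `P(σ > t | ℱ t)`, the quotient is
interpreted as `0` where `Z t = 0` (Lean's division by zero), and the set
`{σ > t} ∩ {Z t = 0}` is `P`-null. -/
theorem stmt_1 {Ω : Type*} {m : MeasurableSpace Ω}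
    (P : Measure Ω) [IsProbabilityMeasure P]
    (ℱ : Filtration NNReal m)
    (σ : Ω → ENNReal) (hσ : Measurable σ)
    (t : NNReal) (G : MeasurableSpace Ω)
    (hG : G = (ℱ t : MeasurableSpace Ω) ⊔
      MeasurableSpace.generateFrom
        {s : Set Ω | ∃ r : NNReal, r ≤ t ∧ s = {ω | (r : ENNReal) < σ ω}})
    (Z : Ω → ℝ) (hZmeas : StronglyMeasurable[ℱ t] Z)
    (hZ : Z =ᵐ[P] P[Set.indicator {ω | (t : ENNReal) < σ ω} (fun _ => (1 : ℝ)) | ℱ t])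
    (ξ : Ω → ℝ) (hξ : Integrable ξ P) :
    P {ω | (t : ENNReal) < σ ω ∧ Z ω = 0} = 0 ∧
    P[fun ω => ξ ω * Set.indicator {ω' | (t : ENNReal) < σ ω'} (fun _ => (1 : ℝ)) ω | G]
      =ᵐ[P] fun ω => Set.indicator {ω' | (t : ENNReal) < σ ω'} (fun _ => (1 : ℝ)) ω *
        ((P[fun ω' => ξ ω' * Set.indicator {ω'' | (t : ENNReal) < σ ω''} (fun _ => (1 : ℝ)) ω' | ℱ t]) ω / Z ω) := by
  subst hG
  set A := {ω | (t : ENNReal) < σ ω}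
  set 𝒞 := {s : Set Ω | ∃ r : NNReal, r ≤ t ∧ s = {ω | (r : ENNReal) < σ ω}}
  have hA : MeasurableSet[m] A := hσ measurableSet_Ioi
  have h𝒞 : ∀ c ∈ 𝒞, A ⊆ c := by
    rintro _ ⟨r, hr, rfl⟩ ω hω
    exact (ENNReal.coe_le_coe.mpr hr).trans_lt hω
  have h𝒢 : (ℱ t : MeasurableSpace Ω) ⊔ MeasurableSpace.generateFrom 𝒞 ≤ m := by
    refine sup_le (ℱ.le t) (MeasurableSpace.generateFrom_le ?_)
    rintro _ ⟨r, -, rfl⟩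
    exact hσ measurableSet_Ioi
  have hA𝒢 : MeasurableSet[(ℱ t : MeasurableSpace Ω) ⊔ MeasurableSpace.generateFrom 𝒞] A :=
    le_sup_right (a := (ℱ t : MeasurableSpace Ω)) _
      (MeasurableSpace.measurableSet_generateFrom ⟨t, le_rfl, rfl⟩)
  have hξA : (fun ω => ξ ω * A.indicator (fun _ => (1 : ℝ)) ω) = A.indicator ξ := by
    ext ω
    by_cases hω : ω ∈ A <;> simp [hω]
  have hsub : {ω | (t : ENNReal) < σ ω ∧ Z ω = 0} ⊆ A ∩ {ω | Z ω ≤ 0} :=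
    fun ω hω => ⟨hω.1, hω.2.le⟩
  refine ⟨measure_mono_null hsub
    (AzemaSupermartingale.measure_inter_nonpos_eq_zero (ℱ.le t) hA hZmeas hZ), ?_⟩
  rw [hξA]
  filter_upwards [AzemaSupermartingale.condExp_indicator_eq_indicator_div le_sup_left h𝒢 hA𝒢
    (fun s => MeasurableSpace.exists_inter_eq_of_measurableSet_sup_generateFrom h𝒞)
    hZmeas hZ hξ] with ω hω
  by_cases hωA : ω ∈ A <;> simp [hω, hωA]
end

section
/- Under the dual projection property, the following are equivalent: (i) A_∞ = 1 P-almost surely; (ii) the law of A_σ under P is the uniform distribution on [0,1]. -/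
/-!
Along a continuous nondecreasing path `A` with `A 0 = 0` and limit `A_∞`, the Stieltjes measure
`dA` is carried by `A` onto Lebesgue measure on `[0, A_∞)`: `dA {u | A u ≤ c} = min c A_∞` for
`c ≥ 0`, because for `c < A_∞` the set `{u | A u ≤ c}` is an interval `[0, t]` with `A t = c`.
The dual projection property applied to `f = 1_{(-∞, c]}` therefore gives
`P(A_σ ≤ c) = E[min c A_∞]`. If `A_∞ = 1` this is the distribution function of the uniform law
on `[0, 1]`. Conversely, `E[min 1 A_∞] = 1` forces `A_∞ ≥ 1` a.s., and then
`E[min 2 A_∞] = 1` forces `A_∞ ≤ 1` a.s.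
-/

open MeasureTheory Filter Set

section StieltjesPath

variable {a : NNReal → ℝ} {μ : Measure NNReal}

lemma exists_setOf_le_eq_Iic (hm : Monotone a) (hc : Continuous a) {c : ℝ} {N : NNReal}
    (h0 : a 0 ≤ c) (hN : c < a N) : ∃ t, a t = c ∧ {u | a u ≤ c} = Iic t := by
  set S := {u | a u ≤ c}
  have hSN : ∀ u ∈ S, u ≤ N := fun u hu => (hm.reflect_lt (lt_of_le_of_lt hu hN)).le
  have hbdd : BddAbove S := ⟨N, hSN⟩
  have hmem : sSup S ∈ S := (isClosed_le hc continuous_const).csSup_mem ⟨0, h0⟩ hbdd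
  refine ⟨sSup S, ?_, subset_antisymm (fun u hu => le_csSup hbdd hu) fun u hu => (hm hu).trans hmem⟩
  obtain ⟨u, hu, hau⟩ := intermediate_value_Icc (hSN _ hmem) hc.continuousOn ⟨hmem, hN.le⟩
  rwa [← le_antisymm (le_csSup hbdd hau.le) hu.1]

lemma measure_Iic_eq_ofReal_sub
    (hIoc : ∀ s t : NNReal, s ≤ t → μ (Ioc s t) = ENNReal.ofReal (a t - a s))
    (hz : μ {0} = 0) (t : NNReal) : μ (Iic t) = ENNReal.ofReal (a t - a 0) := by
  rw [← Icc_bot, ← Ioc_insert_left bot_le, insert_eq,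
    measure_union (disjoint_singleton_left.mpr (by simp)) measurableSet_Ioc]
  simp [hz, hIoc]

lemma measure_setOf_le_eq_ofReal_min {aTop : ℝ} (hm : Monotone a) (hc : Continuous a)
    (h0 : a 0 = 0) (hl : Tendsto a atTop (nhds aTop))
    (hIoc : ∀ s t : NNReal, s ≤ t → μ (Ioc s t) = ENNReal.ofReal (a t - a s))
    (hz : μ {0} = 0) (huniv : μ univ = ENNReal.ofReal aTop) (c : ℝ) :
    μ {u | a u ≤ c} = ENNReal.ofReal (min c aTop) := by
  rcases lt_or_ge c 0 with hc0 | hc0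
  · have hempty : {u | a u ≤ c} = ∅ :=
      eq_empty_of_forall_notMem fun u hu => hc0.not_ge (h0 ▸ (hm bot_le).trans hu)
    rw [hempty, measure_empty, ENNReal.ofReal_eq_zero.mpr ((min_le_left _ _).trans hc0.le)]
  rcases le_or_gt aTop c with hcA | hcA
  · have hall : {u | a u ≤ c} = univ :=
      eq_univ_of_forall fun u => (hm.ge_of_tendsto hl u).trans hcA
    rw [hall, huniv, min_eq_right hcA]
  · obtain ⟨N, hN⟩ := (hl.eventually (eventually_gt_nhds hcA)).exists
    obtain ⟨t, hat, hS⟩ := exists_setOf_le_eq_Iic hm hc (h0 ▸ hc0) hN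
    rw [hS, measure_Iic_eq_ofReal_sub hIoc hz, hat, h0, sub_zero, min_eq_left hcA.le]

end StieltjesPath

lemma volume_restrict_Icc_zero_one_Iic (c : ℝ) :
    volume.restrict (Icc (0 : ℝ) 1) (Iic c) = ENNReal.ofReal (min c 1) := by
  rw [Measure.restrict_apply measurableSet_Iic, inter_comm, ← Ici_inter_Iic, inter_assoc,
    Iic_inter_Iic, Ici_inter_Iic, Real.volume_Icc, sub_zero, min_comm]

lemma measureReal_preimage_Iic_eq_integral_measureReal {Ω T : Type*} {m : MeasurableSpace Ω}
    [MeasurableSpace T] {P : Measure Ω} {g : Ω → ℝ} (hg : Measurable g) {a : T → Ω → ℝ}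
    (ha : ∀ ω, Measurable (a · ω)) {ν : Ω → Measure T}
    (hdual : ∀ f : ℝ → ℝ, Measurable f → (∃ C, ∀ x, |f x| ≤ C) →
      ∫ ω, f (g ω) ∂P = ∫ ω, ∫ u, f (a u ω) ∂(ν ω) ∂P) (c : ℝ) :
    P.real (g ⁻¹' Iic c) = ∫ ω, (ν ω).real {u | a u ω ≤ c} ∂P := by
  have hbdd : ∃ C, ∀ x, |(Iic c).indicator (1 : ℝ → ℝ) x| ≤ C :=
    ⟨1, fun x => by by_cases h : x ≤ c <;> simp [h]⟩
  have h := hdual _ (measurable_one.indicator measurableSet_Iic) hbdd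
  simp only [← indicator_comp_right, Pi.one_comp] at h
  rw [← integral_indicator_one (hg measurableSet_Iic), h]
  congr! with ω
  exact integral_indicator_one (ha ω measurableSet_Iic)

lemma ae_eq_one_of_integral_min_eq_one {Ω : Type*} {m : MeasurableSpace Ω} {P : Measure Ω}
    [IsProbabilityMeasure P] {X : Ω → ℝ}
    (h1 : ∫ ω, min 1 (X ω) ∂P = 1) (h2 : ∫ ω, min 2 (X ω) ∂P = 1) : X =ᵐ[P] 1 := by
  have hi1 : Integrable (fun ω => min 1 (X ω)) P := .of_integral_ne_zero (by simp [h1])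
  have hi2 : Integrable (fun ω => min 2 (X ω)) P := .of_integral_ne_zero (by simp [h2])
  have hge : (fun ω => min 1 (X ω)) =ᵐ[P] 1 :=
    (integral_eq_iff_of_ae_le hi1 (integrable_const 1)
      (.of_forall fun _ => min_le_left _ _)).mp (by simp [h1])
  have hle : (fun ω => min 1 (X ω)) =ᵐ[P] fun ω => min 2 (X ω) :=
    (integral_eq_iff_of_ae_le hi1 hi2
      (.of_forall fun _ => min_le_min_right _ one_le_two)).mp (by rw [h1, h2])
  filter_upwards [hge, hle] with ω e1 e2
  simp only [Pi.one_apply] at e1 ⊢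
  grind

/-- Let `σ : Ω → [0,∞)` be a random time, `A` a jointly measurable
process whose paths are (a.e.) continuous, nondecreasing, start at `0` and converge to a
finite limit `Atop`, and let `ν ω` be the Lebesgue–Stieltjes measure on `(0,∞)` of the
path `t ↦ A t ω`.  Assume the dual projection property:
`E[f(A_σ)] = E[∫ f(A_u) dA_u]` for every bounded measurable `f`.  Then the following are
equivalent: (i) `A_∞ = 1` `P`-a.s.; (ii) the law of `A_σ` under `P` is the uniform
distribution on `[0,1]`. -/
theorem stmt_4 {Ω : Type*} {m : MeasurableSpace Ω}
    (P : Measure Ω) [IsProbabilityMeasure P]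
    (σ : Ω → NNReal) (hσ : Measurable σ)
    (A : NNReal → Ω → ℝ)
    (hAmeas : Measurable fun p : NNReal × Ω => A p.1 p.2)
    (Atop : Ω → ℝ)
    (hpath : ∀ᵐ ω ∂P, Monotone (fun t => A t ω) ∧ Continuous (fun t => A t ω) ∧
      A 0 ω = 0 ∧ Tendsto (fun t => A t ω) atTop (nhds (Atop ω)))
    (ν : Ω → Measure NNReal)
    (hν : ∀ᵐ ω ∂P, (∀ a b : NNReal, a ≤ b →
        ν ω (Set.Ioc a b) = ENNReal.ofReal (A b ω - A a ω)) ∧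
      ν ω {0} = 0 ∧ ν ω Set.univ = ENNReal.ofReal (Atop ω))
    (hdual : ∀ f : ℝ → ℝ, Measurable f → (∃ C, ∀ x, |f x| ≤ C) →
      ∫ ω, f (A (σ ω) ω) ∂P = ∫ ω, ∫ u, f (A u ω) ∂(ν ω) ∂P) :
    (∀ᵐ ω ∂P, Atop ω = 1) ↔
      Measure.map (fun ω => A (σ ω) ω) P = volume.restrict (Set.Icc (0 : ℝ) 1) := by
  set g : Ω → ℝ := fun ω => A (σ ω) ω
  have hg : Measurable g := hAmeas.comp (hσ.prodMk measurable_id)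
  have hlevel : ∀ c, ∀ᵐ ω ∂P, ν ω {u | A u ω ≤ c} = ENNReal.ofReal (min c (Atop ω)) := by
    intro c
    filter_upwards [hpath, hν] with ω ⟨hm, hc, h0, hl⟩ ⟨hIoc, hz, huniv⟩
    exact measure_setOf_le_eq_ofReal_min hm hc h0 hl hIoc hz huniv c
  have hcdf (c : ℝ) : P.real (g ⁻¹' Iic c) = ∫ ω, (ENNReal.ofReal (min c (Atop ω))).toReal ∂P :=
    (measureReal_preimage_Iic_eq_integral_measureReal hg
      (fun ω => hAmeas.comp measurable_prodMk_right) hdual c).trans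
      (integral_congr_ae ((hlevel c).mono fun ω hω => congrArg ENNReal.toReal hω))
  have hAtop : ∀ᵐ ω ∂P, 0 ≤ Atop ω := by
    filter_upwards [hpath] with ω ⟨hm, _, h0, hl⟩
    exact h0 ▸ hm.ge_of_tendsto hl 0
  constructor
  · intro hone
    refine Measure.ext_of_Iic _ _ fun c => ?_
    rw [Measure.map_apply hg measurableSet_Iic, volume_restrict_Icc_zero_one_Iic,
      ← ofReal_measureReal, hcdf, integral_congr_ae (hone.mono fun ω hω => by rw [hω])]
    simp
  · intro hmap
    have hmin (c : ℝ) (hc : 0 ≤ c) : ∫ ω, min c (Atop ω) ∂P = min c 1 := by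
      rw [integral_congr_ae (hAtop.mono fun ω h => (ENNReal.toReal_ofReal (le_min hc h)).symm),
        ← hcdf, ← map_measureReal_apply hg measurableSet_Iic, hmap, measureReal_def,
        volume_restrict_Icc_zero_one_Iic, ENNReal.toReal_ofReal (le_min hc zero_le_one)]
    exact ae_eq_one_of_integral_min_eq_one ((hmin 1 zero_le_one).trans (min_self 1))
      ((hmin 2 zero_le_two).trans (min_eq_right one_le_two))
end

section
/- Under the dual projection property, for every λ > 0 one has λ · E^P[exp(−λ A_σ)] = 1 − E^P[exp(−λ A_∞)]. -/
/-!
Pathwise, the image of the Stieltjes measure `dA` under the path `u ↦ A_u` itself is Lebesgue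
measure on `(0, A_∞]`: since the path is continuous and nondecreasing, each sublevel set
`{u | A_u ≤ s}` with `0 ≤ s < A_∞` is an interval `[0, τ]` with `A_τ = s`, of `dA`-mass `s`.
Hence `∫ e^{-λ A_u} dA_u = (1 - e^{-λ A_∞}) / λ`, and the dual projection property, applied to the
bounded function `x ↦ e^{-λ max x 0}` (which agrees with `e^{-λ x}` on the range of `A`), gives the
claim after taking expectations.
-/

open MeasureTheory Filter Set
open scoped NNReal Topology

theorem Monotone.exists_preimage_Iic_eq_Iic {α β : Type*} [ConditionallyCompleteLinearOrder α]
    [TopologicalSpace α] [OrderTopology α] [DenselyOrdered α] [LinearOrder β]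
    [TopologicalSpace β] [OrderClosedTopology β] {f : α → β} (hf : Monotone f)
    (hcont : Continuous f) {a b : α} {s : β} (ha : f a ≤ s) (hb : s < f b) :
    ∃ τ, f ⁻¹' Iic s = Iic τ ∧ f τ = s := by
  have hab : a ≤ b := hf.reflect_lt (ha.trans_lt hb) |>.le
  obtain ⟨c, -, hc⟩ := intermediate_value_Icc hab hcont.continuousOn ⟨ha, hb.le⟩
  have hbdd : BddAbove (f ⁻¹' Iic s) :=
    ⟨b, fun u hu => hf.reflect_lt (lt_of_le_of_lt hu hb) |>.le⟩
  have hmem : sSup (f ⁻¹' Iic s) ∈ f ⁻¹' Iic s :=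
    (isClosed_Iic.preimage hcont).csSup_mem ⟨c, hc.le⟩ hbdd
  refine ⟨sSup (f ⁻¹' Iic s), subset_antisymm (fun u hu => le_csSup hbdd hu)
    (fun u hu => (hf hu).trans hmem), le_antisymm hmem ?_⟩
  calc s = f c := hc.symm
    _ ≤ f (sSup (f ⁻¹' Iic s)) := hf (le_csSup hbdd (show f c ≤ s from hc.le))

theorem measure_Iic_eq_measure_Ioc_bot {α : Type*} [MeasurableSpace α] [PartialOrder α]
    [OrderBot α] {ν : Measure α} (h : ν {⊥} = 0) (τ : α) : ν (Iic τ) = ν (Ioc ⊥ τ) := by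
  rw [← Icc_sdiff_left (a := ⊥), measure_sdiff_null h, Icc_bot]

theorem integral_exp_neg_mul (l M : ℝ) (hl : l ≠ 0) :
    ∫ x in (0 : ℝ)..M, Real.exp (-(l * x)) = (1 - Real.exp (-(l * M))) / l := by
  rw [intervalIntegral.integral_comp_mul_left (fun y => Real.exp (-y)) hl,
    intervalIntegral.integral_comp_neg, integral_exp]
  simp only [mul_zero, neg_zero, Real.exp_zero, smul_eq_mul]
  field_simp

section Stieltjes

variable {B : ℝ≥0 → ℝ} {M : ℝ} {ν : Measure ℝ≥0}

theorem measure_preimage_Iic (hmono : Monotone B) (hcont : Continuous B) (hB0 : B 0 = 0)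
    (hlim : Tendsto B atTop (𝓝 M)) (hIoc : ∀ a b, a ≤ b → ν (Ioc a b) = ENNReal.ofReal (B b - B a))
    (h0 : ν {0} = 0) (huniv : ν univ = ENNReal.ofReal M) (s : ℝ) :
    ν (B ⁻¹' Iic s) = ENNReal.ofReal (min s M) := by
  have hB_nonneg : ∀ u, 0 ≤ B u := fun u => hB0 ▸ hmono (zero_le : 0 ≤ u)
  have hB_le : ∀ u, B u ≤ M := hmono.ge_of_tendsto hlim
  rcases lt_or_ge s 0 with hs | hs
  · rw [eq_empty_of_forall_notMem (s := B ⁻¹' Iic s)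
      fun u (hu : B u ≤ s) => (hs.trans_le (hB_nonneg u)).not_ge hu,
      measure_empty, eq_comm, ENNReal.ofReal_eq_zero]
    exact (min_le_left s M).trans hs.le
  rcases le_or_gt M s with hMs | hsM
  · rw [eq_univ_of_forall (s := B ⁻¹' Iic s) fun u => (hB_le u).trans hMs, huniv,
      min_eq_right hMs]
  obtain ⟨t, ht⟩ := (hlim.eventually (eventually_gt_nhds hsM)).exists
  obtain ⟨τ, hτ, hBτ⟩ := hmono.exists_preimage_Iic_eq_Iic hcont (hB0.trans_le hs) ht
  rw [hτ, measure_Iic_eq_measure_Ioc_bot h0, hIoc _ _ bot_le, bot_eq_zero', hB0, hBτ, sub_zero,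
    min_eq_left hsM.le]

theorem map_eq_volume_restrict_Ioc (hmono : Monotone B) (hcont : Continuous B) (hB0 : B 0 = 0)
    (hlim : Tendsto B atTop (𝓝 M)) (hIoc : ∀ a b, a ≤ b → ν (Ioc a b) = ENNReal.ofReal (B b - B a))
    (h0 : ν {0} = 0) (huniv : ν univ = ENNReal.ofReal M) :
    ν.map B = volume.restrict (Ioc 0 M) := by
  have : IsFiniteMeasure ν := ⟨by rw [huniv]; exact ENNReal.ofReal_lt_top⟩
  refine Measure.ext_of_Iic _ _ fun s => ?_
  rw [Measure.map_apply hcont.measurable measurableSet_Iic,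
    measure_preimage_Iic hmono hcont hB0 hlim hIoc h0 huniv,
    Measure.restrict_apply measurableSet_Iic, inter_comm, Ioc_inter_Iic, Real.volume_Ioc,
    sub_zero, min_comm]

theorem integral_exp_neg_mul_max_comp (hmono : Monotone B) (hcont : Continuous B) (hB0 : B 0 = 0)
    (hlim : Tendsto B atTop (𝓝 M)) (hIoc : ∀ a b, a ≤ b → ν (Ioc a b) = ENNReal.ofReal (B b - B a))
    (h0 : ν {0} = 0) (huniv : ν univ = ENNReal.ofReal M) {l : ℝ} (hl : l ≠ 0) :
    ∫ u, Real.exp (-(l * max (B u) 0)) ∂ν = (1 - Real.exp (-(l * M))) / l := by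
  have hM : 0 ≤ M := hB0 ▸ hmono.ge_of_tendsto hlim 0
  rw [← integral_map (f := fun x => Real.exp (-(l * max x 0))) hcont.measurable.aemeasurable
      (by fun_prop), map_eq_volume_restrict_Ioc hmono hcont hB0 hlim hIoc h0 huniv,
    setIntegral_congr_fun measurableSet_Ioc fun x hx => by rw [max_eq_left hx.1.le],
    ← intervalIntegral.integral_of_le hM, integral_exp_neg_mul _ _ hl]

end Stieltjes

theorem stmt_5_general {Ω : Type*} {m : MeasurableSpace Ω}
    (P : Measure Ω) [IsProbabilityMeasure P]
    (σ : Ω → NNReal)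
    (A : NNReal → Ω → ℝ)
    (hAmeas : Measurable fun p : NNReal × Ω => A p.1 p.2)
    (Atop : Ω → ℝ)
    (hpath : ∀ᵐ ω ∂P, Monotone (fun t => A t ω) ∧ Continuous (fun t => A t ω) ∧
      A 0 ω = 0 ∧ Tendsto (fun t => A t ω) atTop (nhds (Atop ω)))
    (ν : Ω → Measure NNReal)
    (hν : ∀ᵐ ω ∂P, (∀ a b : NNReal, a ≤ b →
        ν ω (Set.Ioc a b) = ENNReal.ofReal (A b ω - A a ω)) ∧
      ν ω {0} = 0 ∧ ν ω Set.univ = ENNReal.ofReal (Atop ω))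
    (hdual : ∀ f : ℝ → ℝ, Measurable f → (∃ C, ∀ x, |f x| ≤ C) →
      ∫ ω, f (A (σ ω) ω) ∂P = ∫ ω, ∫ u, f (A u ω) ∂(ν ω) ∂P)
    (l : ℝ) (hl : 0 < l) :
    l * ∫ ω, Real.exp (-(l * A (σ ω) ω)) ∂P = 1 - ∫ ω, Real.exp (-(l * Atop ω)) ∂P := by
  set f : ℝ → ℝ := fun x => Real.exp (-(l * max x 0))
  have hf_le_one : ∀ x, |f x| ≤ 1 := fun x => by
    rw [abs_of_pos (Real.exp_pos _), Real.exp_le_one_iff, neg_nonpos]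
    exact mul_nonneg hl.le (le_max_right x 0)
  have hA_nonneg : ∀ᵐ ω ∂P, ∀ t, 0 ≤ A t ω := by
    filter_upwards [hpath] with ω ⟨hmono, _, hA0, _⟩ t
    exact hA0 ▸ hmono (zero_le : 0 ≤ t)
  have hAtop_meas : AEMeasurable Atop P := by
    refine aemeasurable_of_tendsto_metrizable_ae atTop
      (fun n : ℕ => (hAmeas.comp (measurable_prodMk_left (x := (n : ℝ≥0)))).aemeasurable) ?_
    filter_upwards [hpath] with ω ⟨_, _, _, hlim⟩
    exact hlim.comp tendsto_natCast_atTop_atTop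
  have hAtop_int : Integrable (fun ω => Real.exp (-(l * Atop ω))) P := by
    refine .of_bound (by fun_prop) 1 ?_
    filter_upwards [hpath, hA_nonneg] with ω ⟨_, _, _, hlim⟩ hA
    simpa [f, max_eq_left (ge_of_tendsto' hlim hA)] using hf_le_one (Atop ω)
  have hlhs : ∫ ω, Real.exp (-(l * A (σ ω) ω)) ∂P = ∫ ω, f (A (σ ω) ω) ∂P := by
    refine integral_congr_ae ?_
    filter_upwards [hA_nonneg] with ω hA
    simp [f, max_eq_left (hA (σ ω))]
  have hrhs : ∀ᵐ ω ∂P, ∫ u, f (A u ω) ∂(ν ω) = (1 - Real.exp (-(l * Atop ω))) / l := by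
    filter_upwards [hpath, hν] with ω ⟨hmono, hcont, hA0, hlim⟩ ⟨hIoc, h0, huniv⟩
    exact integral_exp_neg_mul_max_comp hmono hcont hA0 hlim hIoc h0 huniv hl.ne'
  rw [hlhs, hdual f (by fun_prop) ⟨1, hf_le_one⟩, integral_congr_ae hrhs, integral_div,
    integral_sub (integrable_const 1) hAtop_int, mul_div_cancel₀ _ hl.ne']
  simp

/-- Under the dual projection property (same setting as Statement 4),
for every `λ > 0` one has `λ · E^P[exp(−λ A_σ)] = 1 − E^P[exp(−λ A_∞)]`. -/
theorem stmt_5 {Ω : Type*} {m : MeasurableSpace Ω}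
    (P : Measure Ω) [IsProbabilityMeasure P]
    (σ : Ω → NNReal) (hσ : Measurable σ)
    (A : NNReal → Ω → ℝ)
    (hAmeas : Measurable fun p : NNReal × Ω => A p.1 p.2)
    (Atop : Ω → ℝ)
    (hpath : ∀ᵐ ω ∂P, Monotone (fun t => A t ω) ∧ Continuous (fun t => A t ω) ∧
      A 0 ω = 0 ∧ Tendsto (fun t => A t ω) atTop (nhds (Atop ω)))
    (ν : Ω → Measure NNReal)
    (hν : ∀ᵐ ω ∂P, (∀ a b : NNReal, a ≤ b →
        ν ω (Set.Ioc a b) = ENNReal.ofReal (A b ω - A a ω)) ∧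
      ν ω {0} = 0 ∧ ν ω Set.univ = ENNReal.ofReal (Atop ω))
    (hdual : ∀ f : ℝ → ℝ, Measurable f → (∃ C, ∀ x, |f x| ≤ C) →
      ∫ ω, f (A (σ ω) ω) ∂P = ∫ ω, ∫ u, f (A u ω) ∂(ν ω) ∂P)
    (l : ℝ) (hl : 0 < l) :
    l * ∫ ω, Real.exp (-(l * A (σ ω) ω)) ∂P = 1 - ∫ ω, Real.exp (-(l * Atop ω)) ∂P :=
  stmt_5_general (m := m) P σ A hAmeas Atop hpath ν hν hdual l hl
end

section
/- Let σ be a random time with P(σ < ∞) = 1 and let M = (M_t)_{t≥0} be an (F_t)-adapted process such that M_σ (defined by ω ↦ M_{σ(ω)}(ω)) and each M_t are P-integrable, and suppose that for each t ≥ 0, E^P[M_σ | G_t] = M_{t∧σ} P-a.s. (as holds when σ is a pseudo-stopping time and M a uniformly integrable martingale). Then for every t ≥ 0, P-almost surely, E^P[M_σ·1_{σ>t} | F_t] = M_t · Z_t. -/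
/-!
The event `{σ > t}` lies in `𝒢 t ⊇ ℱ t`, so by the tower property
`E[M_σ 1_{σ>t} | ℱ t] = E[1_{σ>t} E[M_σ | 𝒢 t] | ℱ t] = E[1_{σ>t} M_{t∧σ} | ℱ t]
= E[M_t 1_{σ>t} | ℱ t]`, and the `ℱ t`-measurable factor `M_t` comes out, leaving `M_t Z_t`.
-/

open MeasureTheory Set
open scoped NNReal ENNReal

theorem MeasureTheory.condExp_indicator_eq_mul_condExp_indicator_one {Ω : Type*}
    {m₁ m₂ m : MeasurableSpace Ω} {μ : Measure Ω} [IsFiniteMeasure μ]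
    (h₁₂ : m₁ ≤ m₂) (h₂ : m₂ ≤ m) {s : Set Ω} (hs : MeasurableSet[m₂] s) {f g : Ω → ℝ}
    (hf : Integrable f μ) (hg : StronglyMeasurable[m₁] g) (hg_int : Integrable g μ)
    (hfg : ∀ᵐ ω ∂μ, ω ∈ s → μ[f | m₂] ω = g ω) :
    μ[s.indicator f | m₁] =ᵐ[μ] g * μ[s.indicator (fun _ => 1) | m₁] := by
  have h_mul : g * s.indicator (fun _ => 1) = s.indicator g := by
    ext ω
    by_cases hω : ω ∈ s <;> simp [hω]
  have h_ind : s.indicator (μ[f | m₂]) =ᵐ[μ] g * s.indicator (fun _ => 1) := by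
    rw [h_mul]
    filter_upwards [hfg] with ω hω
    by_cases hωs : ω ∈ s <;> simp [hωs, hω]
  calc μ[s.indicator f | m₁]
      =ᵐ[μ] μ[μ[s.indicator f | m₂] | m₁] := (condExp_condExp_of_le h₁₂ h₂).symm
    _ =ᵐ[μ] μ[g * s.indicator (fun _ => 1) | m₁] :=
        condExp_congr_ae ((condExp_indicator hf hs).trans h_ind)
    _ =ᵐ[μ] g * μ[s.indicator (fun _ => 1) | m₁] :=
        condExp_mul_of_stronglyMeasurable_left hg (h_mul ▸ hg_int.indicator (h₂ _ hs))
          ((integrable_const 1).indicator (h₂ _ hs))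

namespace ProbabilityTheory

variable {Ω : Type*} {m : MeasurableSpace Ω}

abbrev progressiveEnlargement (ℱ : Filtration ℝ≥0 m) (σ : Ω → ℝ≥0∞) (t : ℝ≥0) :
    MeasurableSpace Ω :=
  ℱ t ⊔ MeasurableSpace.generateFrom {s | ∃ r : ℝ≥0, r ≤ t ∧ s = {ω | (r : ℝ≥0∞) < σ ω}}

theorem le_progressiveEnlargement (ℱ : Filtration ℝ≥0 m) (σ : Ω → ℝ≥0∞) (t : ℝ≥0) :
    ℱ t ≤ progressiveEnlargement ℱ σ t :=
  le_sup_left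

theorem progressiveEnlargement_le (ℱ : Filtration ℝ≥0 m) {σ : Ω → ℝ≥0∞} (hσ : Measurable σ)
    (t : ℝ≥0) : progressiveEnlargement ℱ σ t ≤ m := by
  refine sup_le (ℱ.le t) (MeasurableSpace.generateFrom_le ?_)
  rintro s ⟨r, -, rfl⟩
  exact measurableSet_lt measurable_const hσ

theorem measurableSet_progressiveEnlargement_lt (ℱ : Filtration ℝ≥0 m) (σ : Ω → ℝ≥0∞)
    (t : ℝ≥0) : MeasurableSet[progressiveEnlargement ℱ σ t] {ω | (t : ℝ≥0∞) < σ ω} :=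
  (le_sup_right : _ ≤ progressiveEnlargement ℱ σ t) _
    (MeasurableSpace.measurableSet_generateFrom ⟨t, le_rfl, rfl⟩)

end ProbabilityTheory

open ProbabilityTheory

/-- Let `σ` be a random time with `P(σ < ∞) = 1` and `M` an
`(ℱ t)`-adapted process such that `M_σ` and each `M t` are integrable and
`E^P[M_σ | 𝒢 t] = M_{t∧σ}` `P`-a.s. for each `t`.  Then for every `t ≥ 0`, `P`-a.s.,
`E^P[M_σ·1_{σ>t} | ℱ t] = M t · Z t`, where `Z t = P(σ > t | ℱ t)`. -/
theorem stmt_7 {Ω : Type*} {m : MeasurableSpace Ω}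
    (P : Measure Ω) [IsProbabilityMeasure P]
    (ℱ : Filtration NNReal m)
    (σ : Ω → ENNReal) (hσ : Measurable σ)
    (hσfin : ∀ᵐ ω ∂P, σ ω ≠ ⊤)
    (G : NNReal → MeasurableSpace Ω)
    (hG : ∀ t : NNReal, G t = (ℱ t : MeasurableSpace Ω) ⊔
      MeasurableSpace.generateFrom
        {s : Set Ω | ∃ r : NNReal, r ≤ t ∧ s = {ω | (r : ENNReal) < σ ω}})
    (M : NNReal → Ω → ℝ)
    (hMadapted : ∀ t : NNReal, StronglyMeasurable[ℱ t] (M t))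
    (hMσint : Integrable (fun ω => M (σ ω).toNNReal ω) P)
    (hMint : ∀ t : NNReal, Integrable (M t) P)
    (hcond : ∀ t : NNReal,
      P[fun ω => M (σ ω).toNNReal ω | G t] =ᵐ[P] fun ω => M (min t (σ ω).toNNReal) ω)
    (t : NNReal) :
    P[fun ω => M (σ ω).toNNReal ω * Set.indicator {ω' | (t : ENNReal) < σ ω'} (fun _ => (1 : ℝ)) ω | ℱ t]
      =ᵐ[P] fun ω => M t ω *
        (P[Set.indicator {ω' | (t : ENNReal) < σ ω'} (fun _ => (1 : ℝ)) | ℱ t]) ω := by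
  obtain rfl : G = progressiveEnlargement ℱ σ := funext hG
  -- `(σ ω).toNNReal = 0` when `σ ω = ∞`, so `t < σ ω` yields `t ≤ (σ ω).toNNReal` only if
  -- `σ ω < ∞`.
  have h_stopped : ∀ᵐ ω ∂P, ω ∈ {ω' | (t : ℝ≥0∞) < σ ω'} →
      P[fun ω => M (σ ω).toNNReal ω | progressiveEnlargement ℱ σ t] ω = M t ω := by
    filter_upwards [hcond t, hσfin] with ω hω hσω hlt
    rw [hω, min_eq_left (ENNReal.le_toNNReal_of_coe_le hlt.le hσω)]
  have key := condExp_indicator_eq_mul_condExp_indicator_one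
    (le_progressiveEnlargement ℱ σ t) (progressiveEnlargement_le ℱ hσ t)
    (measurableSet_progressiveEnlargement_lt ℱ σ t) hMσint (hMadapted t) (hMint t) h_stopped
  have h_indicator :
      (fun ω => M (σ ω).toNNReal ω * {ω' | (t : ℝ≥0∞) < σ ω'}.indicator (fun _ => 1) ω) =
        {ω' | (t : ℝ≥0∞) < σ ω'}.indicator (fun ω => M (σ ω).toNNReal ω) := by
    ext ω
    by_cases hω : ω ∈ {ω' | (t : ℝ≥0∞) < σ ω'} <;> simp [hω]
  rw [h_indicator]
  exact key
end

section
/- Let σ be a random time such that Z_t > 0 P-a.s. for every t ≥ 0. Then the process ρ̃_t := 1_{σ>t} / Z_t is a (P, G_t)-martingale: each ρ̃_t is G_t-measurable and P-integrable, and for all 0 ≤ s ≤ t, E^P[ρ̃_t | G_s] = ρ̃_s P-a.s. -/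
/-!
Write `D t = {σ > t}`. Since `Z t = E[1_{D t} | ℱ t]`, the measures `1_{D t} • P` and `Z t • P`
agree on `ℱ t`, so they integrate every nonnegative `ℱ t`-measurable function alike. As `1 / Z t` is
unbounded, this is used in `ℝ≥0∞`: testing against `1_A / Z t` with `A ∈ ℱ t` gives
`E[ρ̃ t; A] = P A`, and `A = Ω` gives integrability. Every `A ∈ 𝒢 s` agrees on `D s` with some
`A' ∈ ℱ s`, and for `s ≤ t` both `ρ̃ s` and `ρ̃ t` vanish off `D s`, so
`E[ρ̃ t; A] = P A' = E[ρ̃ s; A]`.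
-/

open MeasureTheory
open scoped ENNReal

section CondExp

variable {Ω : Type*} {m m₀ : MeasurableSpace Ω} {P : Measure Ω}

theorem lintegral_ofReal_condExp_mul (hm : m ≤ m₀) [SigmaFinite (P.trim hm)] {f : Ω → ℝ}
    (hf : Integrable f P) (hf₀ : 0 ≤ᵐ[P] f) {h : Ω → ℝ≥0∞} (hh : Measurable[m] h) :
    ∫⁻ ω, ENNReal.ofReal (P[f|m] ω) * h ω ∂P = ∫⁻ ω, ENNReal.ofReal (f ω) * h ω ∂P := by
  have htrim : (P.withDensity fun ω => ENNReal.ofReal (P[f|m] ω)).trim hm =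
      (P.withDensity fun ω => ENNReal.ofReal (f ω)).trim hm := by
    refine @Measure.ext _ m _ _ fun B hB => ?_
    rw [trim_measurableSet_eq hm hB, trim_measurableSet_eq hm hB,
      withDensity_apply _ (hm B hB), withDensity_apply _ (hm B hB),
      ← ofReal_integral_eq_lintegral_ofReal integrable_condExp.integrableOn
        (ae_restrict_of_ae (condExp_nonneg hf₀)),
      ← ofReal_integral_eq_lintegral_ofReal hf.integrableOn (ae_restrict_of_ae hf₀),
      setIntegral_condExp hm hf hB]
  have hh₀ : AEMeasurable h P := (hh.mono hm le_rfl).aemeasurable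
  calc ∫⁻ ω, ENNReal.ofReal (P[f|m] ω) * h ω ∂P
      = ∫⁻ ω, h ω ∂(P.withDensity fun ω => ENNReal.ofReal (P[f|m] ω)).trim hm := by
        rw [lintegral_trim hm hh, lintegral_withDensity_eq_lintegral_mul₀
          (stronglyMeasurable_condExp.mono hm).measurable.ennreal_ofReal.aemeasurable hh₀]
        rfl
    _ = ∫⁻ ω, ENNReal.ofReal (f ω) * h ω ∂P := by
        rw [htrim, lintegral_trim hm hh, lintegral_withDensity_eq_lintegral_mul₀
          hf.aemeasurable.ennreal_ofReal hh₀]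
        rfl

theorem setLIntegral_ofReal_condExp_mul (hm : m ≤ m₀) [SigmaFinite (P.trim hm)] {f : Ω → ℝ}
    (hf : Integrable f P) (hf₀ : 0 ≤ᵐ[P] f) {h : Ω → ℝ≥0∞} (hh : Measurable[m] h) {A : Set Ω}
    (hA : MeasurableSet[m] A) :
    ∫⁻ ω in A, ENNReal.ofReal (P[f|m] ω) * h ω ∂P =
      ∫⁻ ω in A, ENNReal.ofReal (f ω) * h ω ∂P := by
  simp only [← lintegral_indicator (hm A hA), Set.indicator_mul_right]
  exact lintegral_ofReal_condExp_mul hm hf hf₀ (hh.indicator hA)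

end CondExp

section IndicatorDiv

variable {Ω : Type*} {m m₀ : MeasurableSpace Ω} {P : Measure Ω} {D A : Set Ω} {Z : Ω → ℝ}

theorem ae_nonneg_indicator_div (hZpos : ∀ᵐ ω ∂P, 0 < Z ω) :
    0 ≤ᵐ[P] fun ω => D.indicator (fun _ => (1 : ℝ)) ω / Z ω :=
  hZpos.mono fun ω hω => div_nonneg (Set.indicator_nonneg (fun _ _ => zero_le_one) ω) hω.le

theorem setLIntegral_ofReal_indicator_div (hm : m ≤ m₀) [IsFiniteMeasure P]
    (hD : MeasurableSet D) (hZm : Measurable[m] Z)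
    (hZ : Z =ᵐ[P] P[D.indicator (fun _ => (1 : ℝ))|m]) (hZpos : ∀ᵐ ω ∂P, 0 < Z ω)
    (hA : MeasurableSet[m] A) :
    ∫⁻ ω in A, ENNReal.ofReal (D.indicator (fun _ => (1 : ℝ)) ω / Z ω) ∂P = P A := by
  calc ∫⁻ ω in A, ENNReal.ofReal (D.indicator (fun _ => (1 : ℝ)) ω / Z ω) ∂P
      = ∫⁻ ω in A, ENNReal.ofReal (D.indicator (fun _ => (1 : ℝ)) ω) *
          (ENNReal.ofReal (Z ω))⁻¹ ∂P :=
        lintegral_congr_ae <| ae_restrict_of_ae <| hZpos.mono fun ω hω => by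
          beta_reduce
          rw [ENNReal.ofReal_div_of_pos hω, div_eq_mul_inv]
    _ = ∫⁻ ω in A, ENNReal.ofReal (P[D.indicator (fun _ => (1 : ℝ))|m] ω) *
          (ENNReal.ofReal (Z ω))⁻¹ ∂P :=
        (setLIntegral_ofReal_condExp_mul hm ((integrable_const 1).indicator hD)
          (Filter.Eventually.of_forall (Set.indicator_nonneg fun _ _ => zero_le_one))
          hZm.ennreal_ofReal.inv hA).symm
    _ = ∫⁻ _ in A, 1 ∂P := by
        refine lintegral_congr_ae <| ae_restrict_of_ae ?_
        filter_upwards [hZ, hZpos] with ω hZω hω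
        rw [← hZω, ENNReal.mul_inv_cancel (ENNReal.ofReal_pos.2 hω).ne' ENNReal.ofReal_ne_top]
    _ = P A := by simp

theorem integrable_indicator_div (hm : m ≤ m₀) [IsFiniteMeasure P]
    (hD : MeasurableSet D) (hZm : Measurable[m] Z)
    (hZ : Z =ᵐ[P] P[D.indicator (fun _ => (1 : ℝ))|m]) (hZpos : ∀ᵐ ω ∂P, 0 < Z ω) :
    Integrable (fun ω => D.indicator (fun _ => (1 : ℝ)) ω / Z ω) P := by
  refine ⟨((measurable_const.indicator hD).div (hZm.mono hm le_rfl)).aestronglyMeasurable,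
    (hasFiniteIntegral_iff_ofReal (ae_nonneg_indicator_div hZpos)).2 ?_⟩
  rw [← setLIntegral_univ, setLIntegral_ofReal_indicator_div hm hD hZm hZ hZpos MeasurableSet.univ]
  exact measure_lt_top P _

theorem setIntegral_indicator_div (hm : m ≤ m₀) [IsFiniteMeasure P]
    (hD : MeasurableSet D) (hZm : Measurable[m] Z)
    (hZ : Z =ᵐ[P] P[D.indicator (fun _ => (1 : ℝ))|m]) (hZpos : ∀ᵐ ω ∂P, 0 < Z ω)
    (hA : MeasurableSet[m] A) :
    ∫ ω in A, D.indicator (fun _ => (1 : ℝ)) ω / Z ω ∂P = P.real A := by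
  rw [integral_eq_lintegral_of_nonneg_ae (ae_restrict_of_ae (ae_nonneg_indicator_div hZpos))
    (integrable_indicator_div hm hD hZm hZ hZpos).aestronglyMeasurable.restrict,
    setLIntegral_ofReal_indicator_div hm hD hZm hZ hZpos hA, measureReal_def]

end IndicatorDiv

section Enlargement

variable {Ω : Type*}

theorem exists_inter_eq_of_measurableSet_sup_generateFrom {F : MeasurableSpace Ω} {D : Set Ω}
    {S : Set (Set Ω)} (hS : ∀ s ∈ S, D ⊆ s) {A : Set Ω}
    (hA : MeasurableSet[F ⊔ MeasurableSpace.generateFrom S] A) :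
    ∃ A', MeasurableSet[F] A' ∧ A ∩ D = A' ∩ D := by
  -- on the trace of `D`, the generators in `S` are all of `D`, so they add nothing to `F`
  have hle : (F ⊔ MeasurableSpace.generateFrom S).comap ((↑) : D → Ω) ≤ F.comap (↑) := by
    rw [MeasurableSpace.comap_sup, MeasurableSpace.comap_generateFrom]
    refine sup_le le_rfl (MeasurableSpace.generateFrom_le ?_)
    rintro _ ⟨s, hs, rfl⟩
    rw [Set.preimage_val_eq_univ_of_subset (hS s hs)]
    exact MeasurableSet.univ
  obtain ⟨A', hA', hpre⟩ := hle _ ⟨A, hA, rfl⟩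
  refine ⟨A', hA', ?_⟩
  rw [Set.inter_comm, ← Subtype.image_preimage_coe, ← hpre, Subtype.image_preimage_coe,
    Set.inter_comm]

theorem exists_inter_eq_of_measurableSet_progressive {F : MeasurableSpace Ω} {σ : Ω → ℝ≥0∞}
    {s : NNReal} {A : Set Ω}
    (hA : MeasurableSet[F ⊔ MeasurableSpace.generateFrom
      {B : Set Ω | ∃ r : NNReal, r ≤ s ∧ B = {ω | (r : ℝ≥0∞) < σ ω}}] A) :
    ∃ A', MeasurableSet[F] A' ∧ A ∩ {ω | (s : ℝ≥0∞) < σ ω} = A' ∩ {ω | (s : ℝ≥0∞) < σ ω} :=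
  exists_inter_eq_of_measurableSet_sup_generateFrom
    (by rintro _ ⟨r, hr, rfl⟩ ω hω; exact (ENNReal.coe_le_coe.2 hr).trans_lt hω) hA

variable {m : MeasurableSpace Ω} {P : Measure Ω}

theorem setIntegral_eq_of_inter_eq {f : Ω → ℝ} {D A A' : Set Ω} (hf : ∀ ω ∉ D, f ω = 0)
    (hA : MeasurableSet A) (hA' : MeasurableSet A') (hAA' : A ∩ D = A' ∩ D) :
    ∫ ω in A, f ω ∂P = ∫ ω in A', f ω ∂P := by
  rw [← integral_indicator hA, ← integral_indicator hA']
  congr 1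
  funext ω
  classical
  by_cases hω : ω ∈ D
  · have hmem : ω ∈ A ↔ ω ∈ A' := by
      simpa only [Set.mem_inter_iff, hω, and_true] using Set.ext_iff.1 hAA' ω
    simp only [Set.indicator_apply, hmem]
  · simp only [Set.indicator_apply, hf ω hω, ite_self]

end Enlargement

/-- Let `σ` be a random time whose Azéma supermartingale satisfies
`Z t > 0` `P`-a.s. for every `t`.  Then `ρ̃ t := 1_{σ>t} / Z t` is a `(P, 𝒢 t)`-martingale:
each `ρ̃ t` is `𝒢 t`-measurable and `P`-integrable, and `E^P[ρ̃ t | 𝒢 s] = ρ̃ s` `P`-a.s.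
for all `s ≤ t`. -/
theorem stmt_13 {Ω : Type*} {m : MeasurableSpace Ω}
    (P : Measure Ω) [IsProbabilityMeasure P]
    (ℱ : Filtration NNReal m)
    (σ : Ω → ENNReal) (hσ : Measurable σ)
    (G : NNReal → MeasurableSpace Ω)
    (hG : ∀ t : NNReal, G t = (ℱ t : MeasurableSpace Ω) ⊔
      MeasurableSpace.generateFrom
        {s : Set Ω | ∃ r : NNReal, r ≤ t ∧ s = {ω | (r : ENNReal) < σ ω}})
    (Z : NNReal → Ω → ℝ)
    (hZmeas : ∀ t : NNReal, StronglyMeasurable[ℱ t] (Z t))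
    (hZver : ∀ t : NNReal,
      Z t =ᵐ[P] P[Set.indicator {ω | (t : ENNReal) < σ ω} (fun _ => (1 : ℝ)) | ℱ t])
    (hZpos : ∀ t : NNReal, ∀ᵐ ω ∂P, 0 < Z t ω)
    (ρ : NNReal → Ω → ℝ)
    (hρ : ∀ t ω, ρ t ω =
      Set.indicator {ω' | (t : ENNReal) < σ ω'} (fun _ => (1 : ℝ)) ω / Z t ω) :
    (∀ t : NNReal, Measurable[G t] (ρ t)) ∧
    (∀ t : NNReal, Integrable (ρ t) P) ∧
    (∀ s t : NNReal, s ≤ t → P[ρ t | G s] =ᵐ[P] ρ s) := by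
  obtain rfl : ρ = fun (t : NNReal) ω =>
      Set.indicator {ω' | (t : ENNReal) < σ ω'} (fun _ => (1 : ℝ)) ω / Z t ω :=
    funext fun t => funext (hρ t)
  have hD (t : NNReal) : MeasurableSet {ω | (t : ENNReal) < σ ω} := hσ measurableSet_Ioi
  have hGm (t : NNReal) : G t ≤ m := by
    rw [hG t]
    exact sup_le (ℱ.le t) (MeasurableSpace.generateFrom_le (by rintro _ ⟨r, -, rfl⟩; exact hD r))
  have hint (t : NNReal) := integrable_indicator_div (ℱ.le t) (hD t) (hZmeas t).measurable
    (hZver t) (hZpos t)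
  have hsetIntegral (t : NNReal) {A : Set Ω} (hA : MeasurableSet[ℱ t] A) :=
    setIntegral_indicator_div (ℱ.le t) (hD t) (hZmeas t).measurable (hZver t) (hZpos t) hA
  have hmeas (t : NNReal) : Measurable[G t] (fun ω =>
      Set.indicator {ω' | (t : ENNReal) < σ ω'} (fun _ => (1 : ℝ)) ω / Z t ω) := by
    have hDt : MeasurableSet[G t] {ω | (t : ENNReal) < σ ω} := by
      rw [hG t]
      exact le_sup_right (a := ℱ t) _ (MeasurableSpace.measurableSet_generateFrom ⟨t, le_rfl, rfl⟩)
    exact (measurable_const.indicator hDt).div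
      ((hZmeas t).measurable.mono (hG t ▸ le_sup_left) le_rfl)
  refine ⟨hmeas, hint, fun s t hst => ?_⟩
  refine (ae_eq_condExp_of_forall_setIntegral_eq (hGm s) (hint t)
    (fun _ _ _ => (hint s).integrableOn) (fun A hA _ => ?_)
    (hmeas s).aestronglyMeasurable).symm
  obtain ⟨A', hA', hAA'⟩ := exists_inter_eq_of_measurableSet_progressive (hG s ▸ hA)
  have hvanish {u : NNReal} (hsu : s ≤ u) (ω : Ω) (hω : ω ∉ {ω | (s : ENNReal) < σ ω}) :
      Set.indicator {ω' | (u : ENNReal) < σ ω'} (fun _ => (1 : ℝ)) ω / Z u ω = 0 := by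
    rw [Set.indicator_of_notMem (s := {ω' | (u : ENNReal) < σ ω'})
      (fun h => hω ((ENNReal.coe_le_coe.2 hsu).trans_lt h)), zero_div]
  rw [setIntegral_eq_of_inter_eq (hvanish le_rfl) (hGm s A hA) (ℱ.le s A' hA') hAA',
    setIntegral_eq_of_inter_eq (hvanish hst) (hGm s A hA) (ℱ.le s A' hA') hAA',
    hsetIntegral s hA', hsetIntegral t (ℱ.mono hst A' hA')]
end

section
/- Let σ be a random time and suppose that Z_t = N_t · D_t P-a.s. for every t ≥ 0, where (N_t) is an (F_t)-martingale and (D_t) is an (F_t)-adapted process with D_t > 0 P-a.s. for every t. Then the process ρ̃_t := 1_{σ>t} / D_t is a (P, G_t)-martingale: each ρ̃_t is G_t-measurable and P-integrable, and for all 0 ≤ s ≤ t, E^P[ρ̃_t | G_s] = ρ̃_s P-a.s. -/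
open MeasureTheory MeasurableSpace Set
open scoped ENNReal NNReal

/-! For `B ∈ ℱ t`, the factorisation `Z = N D` and the `ℱ t`-measurability of `1 / D t` give
`E[1_{σ>t} 1_B / D t] = E[Z t 1_B / D t] = E[N t 1_B]`; this is computed with lower integrals,
as `1 / D t` need not be integrable. So `ρ̃ t` is integrable and has the same integrals over
`ℱ t`-sets as the martingale `N`. Moreover `ρ̃ u` vanishes off `{σ > u}`, so for `r ≤ s ≤ u` its
integral over `B ∩ {σ > r}` equals its integral over `B`. The sets `B` and `B ∩ {σ > r}` with
`B ∈ ℱ s`, `r ≤ s`, form a π-system generating `G s`, on which `ρ̃ t` and `ρ̃ s` therefore have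
equal integrals. -/

theorem IsPiSystem.image2_inter {α : Type*} {S T : Set (Set α)} (hS : IsPiSystem S)
    (hT : IsPiSystem T) : IsPiSystem (image2 (· ∩ ·) S T) := by
  rintro _ ⟨s₁, hs₁, t₁, ht₁, rfl⟩ _ ⟨s₂, hs₂, t₂, ht₂, rfl⟩ hne
  rw [inter_inter_inter_comm] at hne ⊢
  exact mem_image2_of_mem (hS _ hs₁ _ hs₂ hne.left) (hT _ ht₁ _ ht₂ hne.right)

theorem MeasurableSpace.generateFrom_image2_inter {α : Type*} {S T : Set (Set α)}
    (hS : univ ∈ S) (hT : univ ∈ T) :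
    generateFrom (image2 (· ∩ ·) S T) = generateFrom S ⊔ generateFrom T := by
  refine le_antisymm (generateFrom_le ?_) (sup_le (generateFrom_mono ?_) (generateFrom_mono ?_))
  · rintro _ ⟨s, hs, t, ht, rfl⟩
    exact (le_sup_left (b := generateFrom T) _ (measurableSet_generateFrom hs)).inter
      (le_sup_right (a := generateFrom S) _ (measurableSet_generateFrom ht))
  · exact fun s hs => ⟨s, hs, univ, hT, inter_univ s⟩
  · exact fun t ht => ⟨univ, hS, t, ht, univ_inter t⟩

theorem MeasurableSpace.sup_generateFrom_eq_generateFrom_image2_inter {α : Type*}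
    (m : MeasurableSpace α) (T : Set (Set α)) :
    m ⊔ generateFrom T =
      generateFrom (image2 (· ∩ ·) {s | MeasurableSet[m] s} (insert univ T)) := by
  rw [generateFrom_image2_inter (S := {s | MeasurableSet[m] s}) MeasurableSet.univ
      (mem_insert _ _),
    @generateFrom_measurableSet _ m, generateFrom_insert_univ]

theorem isPiSystem_setOf_coe_lt {Ω : Type*} (σ : Ω → ℝ≥0∞) (t : ℝ≥0) :
    IsPiSystem {s : Set Ω | ∃ r : ℝ≥0, r ≤ t ∧ s = {ω | (r : ℝ≥0∞) < σ ω}} := by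
  rintro _ ⟨r₁, hr₁, rfl⟩ _ ⟨r₂, hr₂, rfl⟩ -
  refine ⟨max r₁ r₂, max_le hr₁ hr₂, ?_⟩
  ext ω
  simp

namespace MeasureTheory

variable {Ω : Type*} {m m₀ : MeasurableSpace Ω} {μ : Measure Ω}

theorem setIntegral_eq_of_isPiSystem {E : Type*} [NormedAddCommGroup E] [NormedSpace ℝ E]
    (hm : m ≤ m₀) {S : Set (Set Ω)} (h_eq : m = generateFrom S) (h_pi : IsPiSystem S)
    (h_univ : univ ∈ S) {f g : Ω → E} (hf : Integrable f μ) (hg : Integrable g μ)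
    (basic : ∀ s ∈ S, ∫ x in s, f x ∂μ = ∫ x in s, g x ∂μ) {s : Set Ω}
    (hs : MeasurableSet[m] s) : ∫ x in s, f x ∂μ = ∫ x in s, g x ∂μ := by
  induction s, hs using induction_on_inter h_eq h_pi with
  | empty => simp
  | basic s hs => exact basic s hs
  | compl s hs ih =>
    rw [setIntegral_compl (hm s hs) hf, setIntegral_compl (hm s hs) hg, ih, ← setIntegral_univ,
      basic univ h_univ, setIntegral_univ]
  | iUnion t hdisj ht ih =>
    rw [integral_iUnion (fun i => hm _ (ht i)) hdisj hf.integrableOn,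
      integral_iUnion (fun i => hm _ (ht i)) hdisj hg.integrableOn]
    exact tsum_congr ih

theorem condExp_ae_eq_of_isPiSystem {E : Type*} [NormedAddCommGroup E] [NormedSpace ℝ E]
    [CompleteSpace E] (hm : m ≤ m₀) [SigmaFinite (μ.trim hm)] {S : Set (Set Ω)}
    (h_eq : m = generateFrom S) (h_pi : IsPiSystem S) (h_univ : univ ∈ S) {f g : Ω → E}
    (hf : Integrable f μ) (hg : Integrable g μ) (hgm : StronglyMeasurable[m] g)
    (basic : ∀ s ∈ S, ∫ x in s, f x ∂μ = ∫ x in s, g x ∂μ) : μ[f|m] =ᵐ[μ] g :=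
  (ae_eq_condExp_of_forall_setIntegral_eq hm hf (fun _ _ _ => hg.integrableOn)
    (fun _ hs _ => setIntegral_eq_of_isPiSystem hm h_eq h_pi h_univ hg hf
      (fun s hs => (basic s hs).symm) hs) hgm.aestronglyMeasurable).symm

theorem lintegral_ofReal_condExp_mul (hm : m ≤ m₀) [SigmaFinite (μ.trim hm)] {f : Ω → ℝ}
    (hf : Integrable f μ) (hf_nn : 0 ≤ᵐ[μ] f) {g : Ω → ℝ≥0∞} (hg : Measurable[m] g) :
    ∫⁻ ω, ENNReal.ofReal (μ[f|m] ω) * g ω ∂μ = ∫⁻ ω, ENNReal.ofReal (f ω) * g ω ∂μ := by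
  have htrim : (μ.withDensity fun ω => ENNReal.ofReal (μ[f|m] ω)).trim hm =
      (μ.withDensity fun ω => ENNReal.ofReal (f ω)).trim hm := by
    refine @Measure.ext _ m _ _ fun s hs => ?_
    rw [trim_measurableSet_eq hm hs, trim_measurableSet_eq hm hs, withDensity_apply _ (hm s hs),
      withDensity_apply _ (hm s hs),
      ← ofReal_integral_eq_lintegral_ofReal integrable_condExp.restrict
        (ae_restrict_of_ae (condExp_nonneg hf_nn)),
      ← ofReal_integral_eq_lintegral_ofReal hf.restrict (ae_restrict_of_ae hf_nn),
      setIntegral_condExp hm hf hs]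
  have hg₀ : AEMeasurable g μ := (hg.mono hm le_rfl).aemeasurable
  calc ∫⁻ ω, ENNReal.ofReal (μ[f|m] ω) * g ω ∂μ
      = ∫⁻ ω, g ω ∂(μ.withDensity fun ω => ENNReal.ofReal (μ[f|m] ω)).trim hm := by
        rw [lintegral_trim hm hg, lintegral_withDensity_eq_lintegral_mul₀
          integrable_condExp.aemeasurable.ennreal_ofReal hg₀]
        rfl
    _ = ∫⁻ ω, ENNReal.ofReal (f ω) * g ω ∂μ := by
        rw [htrim, lintegral_trim hm hg,
          lintegral_withDensity_eq_lintegral_mul₀ hf.aemeasurable.ennreal_ofReal hg₀]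
        rfl

variable {f D N : Ω → ℝ}

theorem setLIntegral_ofReal_div_of_condExp_eq_mul (hm : m ≤ m₀) [SigmaFinite (μ.trim hm)]
    (hf : Integrable f μ) (hf_nn : 0 ≤ᵐ[μ] f) (hD : Measurable[m] D)
    (hD_pos : ∀ᵐ ω ∂μ, 0 < D ω) (hZ : μ[f|m] =ᵐ[μ] fun ω => N ω * D ω) {B : Set Ω}
    (hB : MeasurableSet[m] B) :
    ∫⁻ ω in B, ENNReal.ofReal (f ω / D ω) ∂μ = ∫⁻ ω in B, ENNReal.ofReal (N ω) ∂μ := by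
  have key : ∫⁻ ω in B, ENNReal.ofReal (μ[f|m] ω) * ENNReal.ofReal (D ω)⁻¹ ∂μ =
      ∫⁻ ω in B, ENNReal.ofReal (f ω) * ENNReal.ofReal (D ω)⁻¹ ∂μ := by
    rw [← lintegral_indicator (hm B hB), ← lintegral_indicator (hm B hB)]
    simpa only [indicator_mul_right] using
      lintegral_ofReal_condExp_mul hm hf hf_nn (g := B.indicator fun ω => ENNReal.ofReal (D ω)⁻¹)
        (hD.inv.ennreal_ofReal.indicator hB)
  calc ∫⁻ ω in B, ENNReal.ofReal (f ω / D ω) ∂μ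
      = ∫⁻ ω in B, ENNReal.ofReal (f ω) * ENNReal.ofReal (D ω)⁻¹ ∂μ := by
        refine lintegral_congr_ae (ae_restrict_of_ae ?_)
        filter_upwards [hD_pos] with ω hω
        rw [div_eq_mul_inv, ENNReal.ofReal_mul' (inv_nonneg.2 hω.le)]
    _ = ∫⁻ ω in B, ENNReal.ofReal (N ω) ∂μ := by
        rw [← key]
        refine lintegral_congr_ae (ae_restrict_of_ae ?_)
        filter_upwards [hD_pos, hZ] with ω hω hZω
        rw [← ENNReal.ofReal_mul' (inv_nonneg.2 hω.le), hZω, mul_inv_cancel_right₀ hω.ne']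

theorem ae_nonneg_of_condExp_eq_mul (hf_nn : 0 ≤ᵐ[μ] f) (hD_pos : ∀ᵐ ω ∂μ, 0 < D ω)
    (hZ : μ[f|m] =ᵐ[μ] fun ω => N ω * D ω) : 0 ≤ᵐ[μ] N := by
  filter_upwards [condExp_nonneg (m := m) hf_nn, hD_pos, hZ] with ω hZ_nn hω hZω
  exact nonneg_of_mul_nonneg_left (hZω ▸ hZ_nn) hω

theorem integrable_div_of_condExp_eq_mul (hm : m ≤ m₀) [SigmaFinite (μ.trim hm)]
    (hf : Integrable f μ) (hf_nn : 0 ≤ᵐ[μ] f) (hD : Measurable[m] D)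
    (hD_pos : ∀ᵐ ω ∂μ, 0 < D ω) (hN : Integrable N μ) (hZ : μ[f|m] =ᵐ[μ] fun ω => N ω * D ω) :
    Integrable (fun ω => f ω / D ω) μ := by
  have h_nn : 0 ≤ᵐ[μ] fun ω => f ω / D ω := by
    filter_upwards [hf_nn, hD_pos] with ω hfω hω using div_nonneg hfω hω.le
  refine ⟨(hf.aemeasurable.div (hD.mono hm le_rfl).aemeasurable).aestronglyMeasurable, ?_⟩
  have h_eq := setLIntegral_ofReal_div_of_condExp_eq_mul hm hf hf_nn hD hD_pos hZ MeasurableSet.univ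
  rw [Measure.restrict_univ] at h_eq
  rw [hasFiniteIntegral_iff_ofReal h_nn, h_eq]
  exact hN.lintegral_lt_top

theorem setIntegral_div_of_condExp_eq_mul (hm : m ≤ m₀) [SigmaFinite (μ.trim hm)]
    (hf : Integrable f μ) (hf_nn : 0 ≤ᵐ[μ] f) (hD : Measurable[m] D)
    (hD_pos : ∀ᵐ ω ∂μ, 0 < D ω) (hN : Integrable N μ) (hZ : μ[f|m] =ᵐ[μ] fun ω => N ω * D ω)
    {B : Set Ω} (hB : MeasurableSet[m] B) :
    ∫ ω in B, f ω / D ω ∂μ = ∫ ω in B, N ω ∂μ := by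
  have h_nn : 0 ≤ᵐ[μ] fun ω => f ω / D ω := by
    filter_upwards [hf_nn, hD_pos] with ω hfω hω using div_nonneg hfω hω.le
  rw [integral_eq_lintegral_of_nonneg_ae (ae_restrict_of_ae h_nn)
      (integrable_div_of_condExp_eq_mul hm hf hf_nn hD hD_pos hN hZ).aestronglyMeasurable.restrict,
    integral_eq_lintegral_of_nonneg_ae (ae_restrict_of_ae (ae_nonneg_of_condExp_eq_mul hf_nn hD_pos hZ))
      hN.aestronglyMeasurable.restrict,
    setLIntegral_ofReal_div_of_condExp_eq_mul hm hf hf_nn hD hD_pos hZ hB]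

end MeasureTheory

/-- Let `σ` be a random time whose Azéma supermartingale factorises as
`Z t = N t · D t` `P`-a.s. for every `t`, where `N` is an `(ℱ t)`-martingale and `D` is
`(ℱ t)`-adapted with `D t > 0` `P`-a.s.  Then `ρ̃ t := 1_{σ>t} / D t` is a
`(P, 𝒢 t)`-martingale: each `ρ̃ t` is `𝒢 t`-measurable and `P`-integrable, and
`E^P[ρ̃ t | 𝒢 s] = ρ̃ s` `P`-a.s. for all `s ≤ t`. -/
theorem stmt_14 {Ω : Type*} {m : MeasurableSpace Ω}
    (P : Measure Ω) [IsProbabilityMeasure P]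
    (ℱ : Filtration NNReal m)
    (σ : Ω → ENNReal) (hσ : Measurable σ)
    (G : NNReal → MeasurableSpace Ω)
    (hG : ∀ t : NNReal, G t = (ℱ t : MeasurableSpace Ω) ⊔
      MeasurableSpace.generateFrom
        {s : Set Ω | ∃ r : NNReal, r ≤ t ∧ s = {ω | (r : ENNReal) < σ ω}})
    (N D : NNReal → Ω → ℝ)
    (hN : Martingale N ℱ P)
    (hDadapted : ∀ t : NNReal, StronglyMeasurable[ℱ t] (D t))
    (hDpos : ∀ t : NNReal, ∀ᵐ ω ∂P, 0 < D t ω)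
    (hZ : ∀ t : NNReal,
      P[Set.indicator {ω | (t : ENNReal) < σ ω} (fun _ => (1 : ℝ)) | ℱ t]
        =ᵐ[P] fun ω => N t ω * D t ω)
    (ρ : NNReal → Ω → ℝ)
    (hρ : ∀ t ω, ρ t ω =
      Set.indicator {ω' | (t : ENNReal) < σ ω'} (fun _ => (1 : ℝ)) ω / D t ω) :
    (∀ t : NNReal, Measurable[G t] (ρ t)) ∧
    (∀ t : NNReal, Integrable (ρ t) P) ∧
    (∀ s t : NNReal, s ≤ t → P[ρ t | G s] =ᵐ[P] ρ s) := by
  set A : ℝ≥0 → Set Ω := fun t => {ω | (t : ℝ≥0∞) < σ ω}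
  have hρ_eq (t : ℝ≥0) : ρ t = fun ω => (A t).indicator (fun _ => (1 : ℝ)) ω / D t ω :=
    funext (hρ t)
  have hA_mem (t : ℝ≥0) : MeasurableSet[G t] (A t) :=
    hG t ▸ le_sup_right (a := ℱ t) _ (measurableSet_generateFrom ⟨t, le_rfl, rfl⟩)
  have hG_le (t : ℝ≥0) : G t ≤ m := hG t ▸ sup_le (ℱ.le t)
    (generateFrom_le (by rintro _ ⟨r, -, rfl⟩; exact hσ measurableSet_Ioi))
  have hind_int (t : ℝ≥0) : Integrable ((A t).indicator fun _ => (1 : ℝ)) P :=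
    (integrable_const 1).indicator (hσ measurableSet_Ioi)
  have hind_nn (t : ℝ≥0) : 0 ≤ᵐ[P] (A t).indicator fun _ => (1 : ℝ) :=
    ae_of_all _ (indicator_nonneg fun _ _ => zero_le_one)
  have hmeas (t : ℝ≥0) : Measurable[G t] (ρ t) := by
    rw [hρ_eq t]
    exact (measurable_const.indicator (hA_mem t)).div
      ((hDadapted t).measurable.mono (hG t ▸ le_sup_left) le_rfl)
  have hint (t : ℝ≥0) : Integrable (ρ t) P := hρ_eq t ▸ integrable_div_of_condExp_eq_mul
    (ℱ.le t) (hind_int t) (hind_nn t) (hDadapted t).measurable (hDpos t) (hN.integrable t) (hZ t)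
  have hset (t : ℝ≥0) {B : Set Ω} (hB : MeasurableSet[ℱ t] B) :
      ∫ ω in B, ρ t ω ∂P = ∫ ω in B, N t ω ∂P := hρ_eq t ▸ setIntegral_div_of_condExp_eq_mul
    (ℱ.le t) (hind_int t) (hind_nn t) (hDadapted t).measurable (hDpos t) (hN.integrable t) (hZ t) hB
  have hcut {s u : ℝ≥0} (hsu : s ≤ u) {B C : Set Ω} (hB : MeasurableSet B)
      (hC : C ∈ insert univ {s' | ∃ r, r ≤ s ∧ s' = A r}) :
      ∫ ω in B ∩ C, ρ u ω ∂P = ∫ ω in B, ρ u ω ∂P := by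
    refine (setIntegral_eq_of_subset_of_forall_sdiff_eq_zero hB inter_subset_left ?_).symm
    rintro ω ⟨hωB, hωC⟩
    have hωA : ω ∉ A u := by
      rcases hC with rfl | ⟨r, hr, rfl⟩
      · exact absurd ⟨hωB, mem_univ ω⟩ hωC
      · exact fun h => hωC ⟨hωB, (ENNReal.coe_le_coe.2 (hr.trans hsu)).trans_lt h⟩
    rw [hρ u ω, indicator_of_notMem hωA, zero_div]
  refine ⟨hmeas, hint, fun s t hst => condExp_ae_eq_of_isPiSystem (hG_le s)
    ((hG s).trans (sup_generateFrom_eq_generateFrom_image2_inter _ _))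
    ((@isPiSystem_measurableSet _ (ℱ s)).image2_inter (isPiSystem_setOf_coe_lt σ s).insert_univ)
    ⟨univ, MeasurableSet.univ, univ, mem_insert _ _, univ_inter _⟩ (hint t) (hint s)
    (hmeas s).stronglyMeasurable ?_⟩
  rintro _ ⟨B, hB, C, hC, rfl⟩
  rw [hcut hst (ℱ.le s B hB) hC, hcut le_rfl (ℱ.le s B hB) hC, hset t (ℱ.mono hst B hB), hset s hB,
    hN.setIntegral_eq hst hB]
end

section
/- Let σ be an honest random time with P(σ < ∞) = 1 and P(σ = t) = 0 for every t ≥ 0, i.e. for every t > 0 there is an F_t-measurable random variable σ_t : Ω → [0,∞) with σ = σ_t on {σ < t}. Let ρ ≥ 0 with E^P[ρ] = 1, set Q := ρ·P, and let k_t be an F_t-measurable version of E^P[ρ·1_{σ≤t} | F_t]. Fix u ≥ 0 and let (Y_t) be an (F_t)-adapted process such that for every t ≥ u the random variable 1_{σ_t ≤ u}·k_t·Y_t is P-integrable and, for all u ≤ s ≤ t, E^P[1_{σ_t ≤ u}·k_t·Y_t | F_s] = 1_{σ_s ≤ u}·k_s·Y_s P-a.s. Then for every t ≥ u the random variable Y_t·1_{σ≤u}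 is Q-integrable and, for all u ≤ s ≤ t, E^Q[Y_t·1_{σ≤u} | G_s] = Y_s·1_{σ≤u} Q-a.s. -/
/-! Fix `v ≥ u > 0`. Since `σ` a.s. avoids the time `v` and agrees with `σ_v` on `{σ < v}`, we have
`1_{σ ≤ u} = 1_{σ_v ≤ u} 1_{σ ≤ v}` a.s. Hence for `B ∈ ℱ v` the `Q`-integral of `1_B Y_v 1_{σ ≤ u}`
is the `P`-integral of the `ℱ v`-measurable function `1_B 1_{σ_v ≤ u} Y_v` against `ρ 1_{σ ≤ v}`,
and pulling out the conditional expectation replaces `ρ 1_{σ ≤ v}` by `k_v`: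
`E^Q[1_B Y_v 1_{σ ≤ u}] = E^P[1_B 1_{σ_v ≤ u} k_v Y_v]`.
On `{σ < s}` every `G s`-set coincides with an `ℱ s`-set, so on `{σ ≤ u}` the `G s`-conditional
expectation under `Q` is tested by `ℱ s`-sets only, where the `P`-martingale property applies.
For `u = 0` the set `{σ ≤ 0}` is null and there is nothing to prove. -/

open MeasureTheory

open scoped ENNReal NNReal

theorem Set.mul_indicator_one {α M₀ : Type*} [MulZeroOneClass M₀] (s : Set α) (f : α → M₀) :
    (fun a => f a * s.indicator (fun _ => 1) a) = s.indicator f := by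
  ext a
  simp only [← Set.indicator_mul_right, mul_one]

namespace MeasureTheory

variable {Ω : Type*} {m₁ m m₀ : MeasurableSpace Ω} {μ : Measure Ω}

theorem lintegral_mul_condLExp (hm : m ≤ m₀) [SigmaFinite (μ.trim hm)] {g X : Ω → ℝ≥0∞}
    (hg : Measurable[m] g) (hX : AEMeasurable X μ) :
    ∫⁻ ω, g ω * μ⁻[X|m] ω ∂μ = ∫⁻ ω, g ω * X ω ∂μ := by
  have htrim : (μ.withDensity μ⁻[X|m]).trim hm = (μ.withDensity X).trim hm := by
    refine @Measure.ext _ m _ _ fun s hs => ?_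
    rw [trim_measurableSet_eq hm hs, trim_measurableSet_eq hm hs, withDensity_apply _ (hm s hs),
      withDensity_apply _ (hm s hs), setLIntegral_condLExp hm _ _ hs]
  have hg₀ : AEMeasurable g μ := (hg.mono hm le_rfl).aemeasurable
  calc ∫⁻ ω, g ω * μ⁻[X|m] ω ∂μ = ∫⁻ ω, g ω ∂μ.withDensity μ⁻[X|m] := by
        rw [lintegral_withDensity_eq_lintegral_mul₀ (measurable_condLExp' m μ X).aemeasurable hg₀]
        simp only [Pi.mul_apply, mul_comm]
    _ = ∫⁻ ω, g ω ∂μ.withDensity X := by rw [← lintegral_trim hm hg, htrim, lintegral_trim hm hg]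
    _ = ∫⁻ ω, g ω * X ω ∂μ := by
        rw [lintegral_withDensity_eq_lintegral_mul₀ hX hg₀]
        simp only [Pi.mul_apply, mul_comm]

theorem integrable_mul_of_integrable_mul_condExp (hm : m ≤ m₀) [SigmaFinite (μ.trim hm)]
    {f X : Ω → ℝ} (hf : StronglyMeasurable[m] f) (hX : Integrable X μ) (hX0 : 0 ≤ᵐ[μ] X)
    (hfX : Integrable (fun ω => f ω * μ[X|m] ω) μ) :
    Integrable (fun ω => f ω * X ω) μ := by
  refine ⟨(hf.mono hm).aestronglyMeasurable.mul hX.1, ?_⟩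
  have hcond0 : 0 ≤ᵐ[μ] μ[X|m] := condExp_nonneg hX0
  calc ∫⁻ ω, ‖f ω * X ω‖ₑ ∂μ = ∫⁻ ω, ‖f ω‖ₑ * ENNReal.ofReal (X ω) ∂μ := by
        refine lintegral_congr_ae ?_
        filter_upwards [hX0] with ω hω
        rw [enorm_mul, Real.enorm_eq_ofReal hω]
    _ = ∫⁻ ω, ‖f ω‖ₑ * μ⁻[fun ω => ENNReal.ofReal (X ω)|m] ω ∂μ :=
        (lintegral_mul_condLExp hm (measurable_enorm.comp hf.measurable)
          hX.1.aemeasurable.ennreal_ofReal).symm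
    _ = ∫⁻ ω, ‖f ω * μ[X|m] ω‖ₑ ∂μ := by
        refine lintegral_congr_ae ?_
        filter_upwards [condLExp_ofReal m hX hX0, hcond0] with ω hω hω0
        rw [hω, enorm_mul, Real.enorm_eq_ofReal hω0]
    _ < ∞ := hfX.2

theorem integrable_withDensity_ofReal_iff {ρ : Ω → ℝ} (hρ : AEMeasurable ρ μ) (hρ0 : 0 ≤ ρ)
    {g : Ω → ℝ} :
    Integrable g (μ.withDensity fun ω => ENNReal.ofReal (ρ ω)) ↔
      Integrable (fun ω => ρ ω * g ω) μ := by
  simpa [ENNReal.toReal_ofReal (hρ0 _)] using integrable_withDensity_iff_integrable_smul₀'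
    hρ.ennreal_ofReal (ae_of_all _ fun _ => ENNReal.ofReal_lt_top) (g := g)

theorem integral_withDensity_ofReal {ρ : Ω → ℝ} (hρ : AEMeasurable ρ μ) (hρ0 : 0 ≤ ρ)
    (g : Ω → ℝ) :
    ∫ ω, g ω ∂μ.withDensity (fun ω => ENNReal.ofReal (ρ ω)) = ∫ ω, ρ ω * g ω ∂μ := by
  simpa [ENNReal.toReal_ofReal (hρ0 _)] using integral_withDensity_eq_integral_toReal_smul₀
    hρ.ennreal_ofReal (ae_of_all _ fun _ => ENNReal.ofReal_lt_top) g

abbrev enlargeByRandomTime (m : MeasurableSpace Ω) (σ : Ω → ℝ≥0∞) (t : ℝ≥0) : MeasurableSpace Ω :=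
  m ⊔ MeasurableSpace.generateFrom {s : Set Ω | ∃ r : ℝ≥0, r ≤ t ∧ s = {ω | (r : ℝ≥0∞) < σ ω}}

theorem le_enlargeByRandomTime (σ : Ω → ℝ≥0∞) (t : ℝ≥0) : m ≤ enlargeByRandomTime m σ t :=
  le_sup_left

theorem enlargeByRandomTime_le {σ : Ω → ℝ≥0∞} (hσ : Measurable σ) (hm : m ≤ m₀) (t : ℝ≥0) :
    enlargeByRandomTime m σ t ≤ m₀ := by
  refine sup_le hm (MeasurableSpace.generateFrom_le ?_)
  rintro _ ⟨r, -, rfl⟩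
  exact hσ measurableSet_Ioi

theorem measurableSet_enlargeByRandomTime_setOf_le {σ : Ω → ℝ≥0∞} {u t : ℝ≥0} (hut : u ≤ t) :
    MeasurableSet[enlargeByRandomTime m σ t] {ω | σ ω ≤ u} := by
  have hgen : MeasurableSet[enlargeByRandomTime m σ t] {ω | (u : ℝ≥0∞) < σ ω} :=
    le_sup_right (a := m) _ (MeasurableSpace.measurableSet_generateFrom ⟨u, hut, rfl⟩)
  convert hgen.compl
  ext ω
  simp

theorem exists_measurableSet_inter_eq_of_eqOn {σ : Ω → ℝ≥0∞} {τ : Ω → ℝ≥0}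
    (hτ : Measurable[m] τ) {C : Set Ω} (hστ : ∀ ω ∈ C, σ ω = τ ω) {t : ℝ≥0} {A : Set Ω}
    (hA : MeasurableSet[enlargeByRandomTime m σ t] A) :
    ∃ B, MeasurableSet[m] B ∧ A ∩ C = B ∩ C := by
  rw [enlargeByRandomTime, ← @MeasurableSpace.generateFrom_measurableSet Ω m,
    MeasurableSpace.generateFrom_sup_generateFrom] at hA
  induction A, hA using MeasurableSpace.generateFrom_induction with
  | hC A hA =>
    rcases hA with hA | ⟨r, -, rfl⟩
    · exact ⟨A, hA, rfl⟩
    · refine ⟨τ ⁻¹' Set.Ioi r, hτ measurableSet_Ioi, ?_⟩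
      ext ω
      simp +contextual [hστ, and_congr_left_iff]
  | empty => exact ⟨∅, .empty, rfl⟩
  | compl A _ ih =>
    obtain ⟨B, hB, hAB⟩ := ih
    refine ⟨Bᶜ, hB.compl, ?_⟩
    ext ω
    have h := Set.ext_iff.mp hAB ω
    simp only [Set.mem_inter_iff, Set.mem_compl_iff] at h ⊢
    tauto
  | iUnion A _ ih =>
    choose B hB hAB using ih
    refine ⟨⋃ n, B n, .iUnion hB, ?_⟩
    simp only [Set.iUnion_inter, hAB]

theorem setOf_le_ae_eq_inter_of_eq_of_lt {σ : Ω → ℝ≥0∞} {τ : Ω → ℝ≥0} {u v : ℝ≥0}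
    (hστ : ∀ ω, σ ω < v → σ ω = τ ω) (hσv : ∀ᵐ ω ∂μ, σ ω ≠ v) (huv : u ≤ v) :
    {ω | σ ω ≤ u} =ᵐ[μ] ({ω | τ ω ≤ u} ∩ {ω | σ ω ≤ v} : Set Ω) := by
  refine Filter.eventuallyEq_set.mpr ?_
  filter_upwards [hσv] with ω hω
  have hlt : σ ω ≤ v → σ ω = τ ω := fun h => hστ ω (h.lt_of_ne hω)
  have huv' : (u : ℝ≥0∞) ≤ v := ENNReal.coe_le_coe.mpr huv
  constructor
  · intro h
    exact ⟨by simpa [hlt (h.trans huv')] using h, h.trans huv'⟩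
  · rintro ⟨h, hv⟩
    simpa [hlt hv] using h

theorem exists_measurableSet_inter_setOf_le_ae_eq {σ : Ω → ℝ≥0∞} {τ : Ω → ℝ≥0} {u t : ℝ≥0}
    (hτ : Measurable[m] τ) (hστ : ∀ ω, σ ω < t → σ ω = τ ω) (hσt : ∀ᵐ ω ∂μ, σ ω ≠ t)
    (hut : u ≤ t) {A : Set Ω} (hA : MeasurableSet[enlargeByRandomTime m σ t] A) :
    ∃ B, MeasurableSet[m] B ∧
      (A ∩ {ω | σ ω ≤ u} : Set Ω) =ᵐ[μ] (B ∩ {ω | σ ω ≤ u} : Set Ω) := by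
  obtain ⟨B, hB, hAB⟩ := exists_measurableSet_inter_eq_of_eqOn hτ
    (C := {ω | σ ω < t}) (fun ω hω => hστ ω hω) hA
  refine ⟨B, hB, Filter.eventuallyEq_set.mpr ?_⟩
  filter_upwards [hσt] with ω hω
  have hωC : σ ω ≤ u → σ ω < t := fun h => (h.trans (ENNReal.coe_le_coe.mpr hut)).lt_of_ne hω
  have hωAB := Set.ext_iff.mp hAB ω
  exact ⟨fun h => ⟨(hωAB.mp ⟨h.1, hωC h.2⟩).1, h.2⟩, fun h => ⟨(hωAB.mpr ⟨h.1, hωC h.2⟩).1, h.2⟩⟩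

theorem integrableOn_indicator_and_setIntegral_withDensity_eq
    (hm : m ≤ m₀) [SigmaFinite (μ.trim hm)] {ρ : Ω → ℝ} (hρ0 : 0 ≤ ρ) (hρ : Integrable ρ μ)
    {S T D : Set Ω} (hT : MeasurableSet[m] T) (hD : MeasurableSet D) (hS : S =ᵐ[μ] (T ∩ D : Set Ω))
    {k Y : Ω → ℝ} (hk : k =ᵐ[μ] μ[D.indicator ρ|m]) (hY : StronglyMeasurable[m] Y)
    (hkY : Integrable (T.indicator fun ω => k ω * Y ω) μ) {B : Set Ω} (hB : MeasurableSet[m] B) :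
    IntegrableOn (S.indicator Y) B (μ.withDensity fun ω => ENNReal.ofReal (ρ ω)) ∧
      ∫ ω in B, S.indicator Y ω ∂μ.withDensity (fun ω => ENNReal.ofReal (ρ ω)) =
        ∫ ω in B, T.indicator (fun ω => k ω * Y ω) ω ∂μ := by
  rw [← integrable_indicator_iff (hm B hB), ← integral_indicator (hm B hB),
    ← integral_indicator (hm B hB), integrable_withDensity_ofReal_iff hρ.1.aemeasurable hρ0,
    integral_withDensity_ofReal hρ.1.aemeasurable hρ0]
  set f := (B ∩ T).indicator Y
  have hf : StronglyMeasurable[m] f := hY.indicator (hB.inter hT)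
  have hρS : (fun ω => ρ ω * B.indicator (S.indicator Y) ω) =ᵐ[μ]
      fun ω => f ω * D.indicator ρ ω := by
    filter_upwards [(indicator_ae_eq_of_ae_eq_set hS : S.indicator Y =ᵐ[μ] _)] with ω hω
    classical
    simp only [hω, f, Set.indicator_apply, Set.mem_inter_iff]
    split_ifs <;> simp_all [mul_comm]
  have hfk : (fun ω => f ω * μ[D.indicator ρ|m] ω) =ᵐ[μ]
      B.indicator (T.indicator fun ω => k ω * Y ω) := by
    filter_upwards [hk] with ω hω
    classical
    simp only [← hω, f, Set.indicator_apply, Set.mem_inter_iff]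
    split_ifs <;> simp_all [mul_comm]
  have hDρ : Integrable (D.indicator ρ) μ := hρ.indicator hD
  have hfD : Integrable (fun ω => f ω * D.indicator ρ ω) μ :=
    integrable_mul_of_integrable_mul_condExp hm hf hDρ
      (ae_of_all _ (Set.indicator_nonneg fun ω _ => hρ0 ω))
      ((hkY.indicator (hm B hB)).congr hfk.symm)
  refine ⟨hfD.congr hρS.symm, ?_⟩
  calc ∫ ω, ρ ω * B.indicator (S.indicator Y) ω ∂μ = ∫ ω, f ω * D.indicator ρ ω ∂μ :=
        integral_congr_ae hρS
    _ = ∫ ω, μ[fun ω => f ω * D.indicator ρ ω|m] ω ∂μ := (integral_condExp hm).symm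
    _ = ∫ ω, f ω * μ[D.indicator ρ|m] ω ∂μ :=
        integral_congr_ae (condExp_mul_of_stronglyMeasurable_left hf hfD hDρ)
    _ = _ := integral_congr_ae hfk

theorem indicator_ae_eq_condExp_of_trace (hm : m ≤ m₀) [SigmaFinite (μ.trim hm)] {S : Set Ω}
    (hS : MeasurableSet[m] S)
    (htrace : ∀ A, MeasurableSet[m] A →
      ∃ B, MeasurableSet[m₁] B ∧ (A ∩ S : Set Ω) =ᵐ[μ] (B ∩ S : Set Ω))
    {X X' : Ω → ℝ} (hX : Integrable (S.indicator X) μ) (hX'm : StronglyMeasurable[m] X')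
    (hX' : Integrable (S.indicator X') μ)
    (heq : ∀ B, MeasurableSet[m₁] B →
      ∫ ω in B, S.indicator X' ω ∂μ = ∫ ω in B, S.indicator X ω ∂μ) :
    S.indicator X' =ᵐ[μ] μ[S.indicator X|m] := by
  refine ae_eq_condExp_of_forall_setIntegral_eq hm hX (fun _ _ _ => hX'.integrableOn)
    (fun A hA _ => ?_) (hX'm.indicator hS).aestronglyMeasurable
  obtain ⟨B, hB, hAB⟩ := htrace A hA
  have hAB_int : ∀ Z : Ω → ℝ, ∫ ω in A, S.indicator Z ω ∂μ = ∫ ω in B, S.indicator Z ω ∂μ := by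
    intro Z
    rw [setIntegral_indicator (hm S hS), setIntegral_indicator (hm S hS), setIntegral_congr_set hAB]
  rw [hAB_int, hAB_int, heq B hB]

end MeasureTheory

theorem stmt_15_general {Ω : Type*} {m : MeasurableSpace Ω}
    (P : Measure Ω) [IsProbabilityMeasure P]
    (ℱ : Filtration NNReal m)
    (σ : Ω → ENNReal) (hσ : Measurable σ)
    (hσavoid : ∀ t : NNReal, P {ω | σ ω = (t : ENNReal)} = 0)
    (st : NNReal → Ω → NNReal)
    (hst : ∀ t : NNReal, 0 < t → Measurable[ℱ t] (st t) ∧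
      ∀ ω, σ ω < (t : ENNReal) → σ ω = (st t ω : ENNReal))
    (ρ : Ω → ℝ) (hρ0 : 0 ≤ ρ) (hρint : Integrable ρ P)
    (Q : Measure Ω) (hQ : Q = P.withDensity fun ω => ENNReal.ofReal (ρ ω))
    (G : NNReal → MeasurableSpace Ω)
    (hG : ∀ t : NNReal, G t = (ℱ t : MeasurableSpace Ω) ⊔
      MeasurableSpace.generateFrom
        {s : Set Ω | ∃ r : NNReal, r ≤ t ∧ s = {ω | (r : ENNReal) < σ ω}})
    (k : NNReal → Ω → ℝ)
    (hkver : ∀ t : NNReal,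
      k t =ᵐ[P] P[fun ω => ρ ω * Set.indicator {ω' | σ ω' ≤ (t : ENNReal)} (fun _ => (1 : ℝ)) ω | ℱ t])
    (u : NNReal)
    (Y : NNReal → Ω → ℝ)
    (hYadapted : ∀ t : NNReal, StronglyMeasurable[ℱ t] (Y t))
    (hint : ∀ t : NNReal, u ≤ t →
      Integrable (fun ω => Set.indicator {ω' | st t ω' ≤ u} (fun ω' => k t ω' * Y t ω') ω) P)
    (hmart : ∀ s t : NNReal, u ≤ s → s ≤ t →
      P[fun ω => Set.indicator {ω' | st t ω' ≤ u} (fun ω' => k t ω' * Y t ω') ω | ℱ s]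
        =ᵐ[P] fun ω => Set.indicator {ω' | st s ω' ≤ u} (fun ω' => k s ω' * Y s ω') ω) :
    (∀ t : NNReal, u ≤ t →
      Integrable (fun ω => Y t ω * Set.indicator {ω' | σ ω' ≤ (u : ENNReal)} (fun _ => (1 : ℝ)) ω) Q) ∧
    (∀ s t : NNReal, u ≤ s → s ≤ t →
      Q[fun ω => Y t ω * Set.indicator {ω' | σ ω' ≤ (u : ENNReal)} (fun _ => (1 : ℝ)) ω | G s]
        =ᵐ[Q] fun ω => Y s ω * Set.indicator {ω' | σ ω' ≤ (u : ENNReal)} (fun _ => (1 : ℝ)) ω) := by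
  have : IsFiniteMeasure Q := hQ ▸ isFiniteMeasure_withDensity_ofReal hρint.2
  have hQP : Q ≪ P := hQ ▸ withDensity_absolutelyContinuous _ _
  have hne : ∀ v : ℝ≥0, ∀ᵐ ω ∂P, σ ω ≠ v := fun v => measure_eq_zero_iff_ae_notMem.mp (hσavoid v)
  simp only [Set.mul_indicator_one] at hkver ⊢
  set S := {ω | σ ω ≤ (u : ℝ≥0∞)}
  rcases eq_zero_or_pos u with rfl | hu
  · have hS0 : ∀ Z : Ω → ℝ, S.indicator Z =ᵐ[Q] 0 := fun Z =>
      hQP.ae_le <| by filter_upwards [hne 0] with ω hω using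
        Set.indicator_of_notMem (by simpa [S] using hω) Z
    refine ⟨fun t _ => (integrable_zero _ _ _).congr (hS0 _).symm, fun s t _ _ => ?_⟩
    exact (condExp_congr_ae (hS0 _)).trans (by rw [condExp_zero]; exact (hS0 _).symm)
  have key : ∀ v, u ≤ v → ∀ B, MeasurableSet[ℱ v] B →
      IntegrableOn (S.indicator (Y v)) B Q ∧ ∫ ω in B, S.indicator (Y v) ω ∂Q =
        ∫ ω in B, {ω | st v ω ≤ u}.indicator (fun ω => k v ω * Y v ω) ω ∂P := by
    intro v hv B hB
    have hst_v := hst v (hu.trans_le hv)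
    rw [hQ]
    exact integrableOn_indicator_and_setIntegral_withDensity_eq (ℱ.le v) hρ0 hρint
      (hst_v.1 measurableSet_Iic) (hσ measurableSet_Iic)
      (setOf_le_ae_eq_inter_of_eq_of_lt hst_v.2 (hne v) hv) (hkver v) (hYadapted v) (hint v hv) hB
  have hint_Q : ∀ t, u ≤ t → Integrable (S.indicator (Y t)) Q := fun t ht =>
    integrableOn_univ.mp (key t ht _ .univ).1
  refine ⟨hint_Q, fun s t hs hst' => ?_⟩
  have hst_s := hst s (hu.trans_le hs)
  rw [hG s]
  refine (indicator_ae_eq_condExp_of_trace (enlargeByRandomTime_le hσ (ℱ.le s) s)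
    (measurableSet_enlargeByRandomTime_setOf_le hs)
    (fun A hA =>
      exists_measurableSet_inter_setOf_le_ae_eq hst_s.1 hst_s.2 (hQP.ae_le (hne s)) hs hA)
    (hint_Q t (hs.trans hst')) ((hYadapted s).mono (le_enlargeByRandomTime σ s)) (hint_Q s hs)
    fun B hB => ?_).symm
  rw [(key s hs B hB).2, (key t (hs.trans hst') B (ℱ.mono hst' _ hB)).2,
    ← setIntegral_condExp (ℱ.le s) (hint t (hs.trans hst')) hB]
  exact setIntegral_congr_ae (ℱ.le s _ hB) <| by
    filter_upwards [hmart s t hs hst'] with ω hω _ using hω.symm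

/-- Let `σ` be an honest random time (finite a.s., avoiding
deterministic times, with `ℱ t`-measurable `σ_t` satisfying `σ = σ_t` on `{σ < t}`),
let `ρ ≥ 0` with `E^P[ρ] = 1`, `Q := ρ·P`, and let `k t` be an `ℱ t`-measurable version
of `E^P[ρ·1_{σ≤t} | ℱ t]`.  Fix `u ≥ 0` and let `Y` be `(ℱ t)`-adapted such that
`(1_{σ_t ≤ u}·k t·Y t)_{t ≥ u}` is a `(P, ℱ t)`-martingale on `[u,∞)`.  Then
`(Y t·1_{σ ≤ u})_{t ≥ u}` is a `(Q, 𝒢 t)`-martingale on `[u,∞)`. -/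
theorem stmt_15 {Ω : Type*} {m : MeasurableSpace Ω}
    (P : Measure Ω) [IsProbabilityMeasure P]
    (ℱ : Filtration NNReal m)
    (σ : Ω → ENNReal) (hσ : Measurable σ)
    (hσfin : ∀ᵐ ω ∂P, σ ω ≠ ⊤)
    (hσavoid : ∀ t : NNReal, P {ω | σ ω = (t : ENNReal)} = 0)
    (st : NNReal → Ω → NNReal)
    (hst : ∀ t : NNReal, 0 < t → Measurable[ℱ t] (st t) ∧
      ∀ ω, σ ω < (t : ENNReal) → σ ω = (st t ω : ENNReal))
    (ρ : Ω → ℝ) (hρ0 : 0 ≤ ρ) (hρint : Integrable ρ P) (hρ1 : ∫ ω, ρ ω ∂P = 1)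
    (Q : Measure Ω) (hQ : Q = P.withDensity fun ω => ENNReal.ofReal (ρ ω))
    (G : NNReal → MeasurableSpace Ω)
    (hG : ∀ t : NNReal, G t = (ℱ t : MeasurableSpace Ω) ⊔
      MeasurableSpace.generateFrom
        {s : Set Ω | ∃ r : NNReal, r ≤ t ∧ s = {ω | (r : ENNReal) < σ ω}})
    (k : NNReal → Ω → ℝ)
    (hkmeas : ∀ t : NNReal, StronglyMeasurable[ℱ t] (k t))
    (hkver : ∀ t : NNReal,
      k t =ᵐ[P] P[fun ω => ρ ω * Set.indicator {ω' | σ ω' ≤ (t : ENNReal)} (fun _ => (1 : ℝ)) ω | ℱ t])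
    (u : NNReal)
    (Y : NNReal → Ω → ℝ)
    (hYadapted : ∀ t : NNReal, StronglyMeasurable[ℱ t] (Y t))
    (hint : ∀ t : NNReal, u ≤ t →
      Integrable (fun ω => Set.indicator {ω' | st t ω' ≤ u} (fun ω' => k t ω' * Y t ω') ω) P)
    (hmart : ∀ s t : NNReal, u ≤ s → s ≤ t →
      P[fun ω => Set.indicator {ω' | st t ω' ≤ u} (fun ω' => k t ω' * Y t ω') ω | ℱ s]
        =ᵐ[P] fun ω => Set.indicator {ω' | st s ω' ≤ u} (fun ω' => k s ω' * Y s ω') ω) :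
    (∀ t : NNReal, u ≤ t →
      Integrable (fun ω => Y t ω * Set.indicator {ω' | σ ω' ≤ (u : ENNReal)} (fun _ => (1 : ℝ)) ω) Q) ∧
    (∀ s t : NNReal, u ≤ s → s ≤ t →
      Q[fun ω => Y t ω * Set.indicator {ω' | σ ω' ≤ (u : ENNReal)} (fun _ => (1 : ℝ)) ω | G s]
        =ᵐ[Q] fun ω => Y s ω * Set.indicator {ω' | σ ω' ≤ (u : ENNReal)} (fun _ => (1 : ℝ)) ω) :=
  stmt_15_general P ℱ σ hσ hσavoid st hst ρ hρ0 hρint Q hQ G hG k hkver u Y hYadapted hint hmart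
end

section
/- Let Q be a probability measure, (G_t)_{t≥0} a filtration, and σ a (G_t)-stopping time with Q(σ < ∞) = 1. Let Y : [0,∞) × Ω → ℝ be a bounded, (G_t)-progressively measurable process with right-continuous sample paths. Assume that for every u > 0 the process t ↦ 1_{σ≤u}·(Y_{t∨u} − Y_u) is a (Q, G_t)-martingale. Then the process t ↦ Y_{t∨σ} − Y_σ (where Y_{t∨σ}(ω) := Y_{max(t,σ(ω))}(ω) and Y_σ(ω) := Y_{σ(ω)}(ω)) is a (Q, G_t)-martingale. -/
/-!
Approximate `σ` from above on the grid `(k + 1) / (n + 1)`: on the event `Dₖ` that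
`(k + 1) / (n + 1)` is the first grid point `≥ σ`, the increment `Y_{t∨σₙ} − Y_{σₙ}` equals the
hypothesis martingale for `u = (k + 1) / (n + 1)`. That martingale vanishes up to time `u` and
`Dₖ ∈ 𝒢 u`, so its product with `1_{Dₖ}` is still a martingale. Finite sums over `k` give
uniformly bounded martingales which, by right continuity of `Y`, converge to `Y_{t∨σ} − Y_σ` on
`{σ < ∞}`; dominated convergence passes the martingale property to the limit, whose adapted
version is `Y_t − Y_{t∧σ}`.
-/

open MeasureTheory Filter
open scoped NNReal ENNReal Topology

namespace MeasureTheory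

variable {Ω ι E : Type*} {m : MeasurableSpace Ω} {μ : Measure Ω}
  [NormedAddCommGroup E] [NormedSpace ℝ E] [CompleteSpace E]

section Preorder

variable [Preorder ι] {ℱ : Filtration ι m}

theorem martingale_of_setIntegral_eq [IsFiniteMeasure μ] {f : ι → Ω → E}
    (hadp : StronglyAdapted ℱ f) (hint : ∀ i, Integrable (f i) μ)
    (hf : ∀ i j, i ≤ j → ∀ s, MeasurableSet[ℱ i] s →
      ∫ ω in s, f i ω ∂μ = ∫ ω in s, f j ω ∂μ) :
    Martingale f ℱ μ :=
  ⟨hadp, fun i j hij => (ae_eq_condExp_of_forall_setIntegral_eq (ℱ.le i) (hint j)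
    (fun _ _ _ => (hint i).integrableOn) (fun s hs _ => hf i j hij s hs)
    (hadp i).aestronglyMeasurable).symm⟩

theorem martingale_finset_sum {α : Type*} {s : Finset α} {f : α → ι → Ω → E}
    (hf : ∀ a ∈ s, Martingale (f a) ℱ μ) : Martingale (∑ a ∈ s, f a) ℱ μ :=
  Finset.sum_induction _ (fun g => Martingale g ℱ μ) (fun _ _ => Martingale.add)
    (martingale_zero E ℱ μ) hf

theorem martingale_of_tendsto [IsFiniteMeasure μ] {X : ℕ → ι → Ω → E}
    {V : ι → Ω → E} (hX : ∀ n, Martingale (X n) ℱ μ) (hV : StronglyAdapted ℱ V) {C : ℝ}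
    (hbdd : ∀ n t, ∀ᵐ ω ∂μ, ‖X n t ω‖ ≤ C)
    (hlim : ∀ t, ∀ᵐ ω ∂μ, Tendsto (fun n => X n t ω) atTop (𝓝 (V t ω))) :
    Martingale V ℱ μ := by
  have hVbdd : ∀ t, ∀ᵐ ω ∂μ, ‖V t ω‖ ≤ C := fun t => by
    filter_upwards [hlim t, ae_all_iff.2 fun n => hbdd n t] with ω hω hωC
    exact le_of_tendsto' hω.norm hωC
  have hsetInt : ∀ t A, MeasurableSet A →
      Tendsto (fun n => ∫ ω in A, X n t ω ∂μ) atTop (𝓝 (∫ ω in A, V t ω ∂μ)) :=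
    fun t A hA => tendsto_integral_of_dominated_convergence (fun _ => C)
      (fun n => ((hX n).stronglyMeasurable t).mono (ℱ.le t) |>.aestronglyMeasurable)
      (integrable_const C) (fun n => ae_restrict_of_ae (hbdd n t)) (ae_restrict_of_ae (hlim t))
  refine martingale_of_setIntegral_eq hV
    (fun t => Integrable.mono' (integrable_const C) ((hV t).mono (ℱ.le t)).aestronglyMeasurable
      (hVbdd t)) (fun s t hst A hA => ?_)
  exact tendsto_nhds_unique (hsetInt s A (ℱ.le s A hA))
    ((hsetInt t A (ℱ.le s A hA)).congr fun n => ((hX n).setIntegral_eq hst hA).symm)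

end Preorder

theorem Martingale.indicator_of_forall_le_eq_zero [LinearOrder ι] [IsFiniteMeasure μ]
    {ℱ : Filtration ι m} {M : ι → Ω → E} (hM : Martingale M ℱ μ) {v : ι}
    (hv : ∀ t ≤ v, M t = 0) {B : Set Ω} (hB : MeasurableSet[ℱ v] B) :
    Martingale (fun t => B.indicator (M t)) ℱ μ := by
  have hMmax : ∀ t, M t = M (max t v) := fun t => by
    rcases le_total t v with htv | hvt
    · rw [max_eq_right htv, hv t htv, hv v le_rfl]
    · rw [max_eq_left hvt]
  refine martingale_of_setIntegral_eq (fun t => ?_)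
    (fun t => (hM.integrable t).indicator (ℱ.le v B hB)) (fun s t hst A hA => ?_)
  · rcases le_total v t with hvt | htv
    · exact (hM.stronglyMeasurable t).indicator (ℱ.mono hvt B hB)
    · rw [hv t htv, Set.indicator_zero']
      exact stronglyMeasurable_const
  · have hAB : MeasurableSet[ℱ (max s v)] (A ∩ B) :=
      (ℱ.mono (le_max_left s v) A hA).inter (ℱ.mono (le_max_right s v) B hB)
    rw [setIntegral_indicator (ℱ.le v B hB), setIntegral_indicator (ℱ.le v B hB),
      hMmax s, hMmax t]
    exact hM.setIntegral_eq (max_le_max_right v hst) hAB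

theorem sub_stoppedProcess_eq_of_eq_coe [LinearOrder ι] [Nonempty ι] {β : Type*} [AddGroup β]
    {u : ι → Ω → β} {τ : Ω → WithTop ι} {ω : Ω} {a : ι} (hτ : τ ω = a) (t : ι) :
    u t ω - stoppedProcess u τ t ω = u (max t a) ω - u a ω := by
  rcases le_total t a with hta | hat
  · rw [stoppedProcess_eq_of_le (hτ ▸ WithTop.coe_le_coe.2 hta), max_eq_right hta, sub_self,
      sub_self]
  · rw [stoppedProcess_eq_of_ge (hτ ▸ WithTop.coe_le_coe.2 hat), hτ, max_eq_left hat]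
    rfl

end MeasureTheory

theorem le_of_mem_disjointed_of_mem {α ι : Type*} [LinearOrder ι] [LocallyFiniteOrderBot ι]
    {E : ι → Set α} {x : α} {k j : ι} (hk : x ∈ disjointed E k) (hj : x ∈ E j) : k ≤ j := by
  rw [disjointed_eq_inter_compl] at hk
  by_contra hjk
  exact Set.mem_iInter₂.1 hk.2 j (not_le.1 hjk) hj

theorem Finset.sum_indicator_apply_of_mem {α ι β : Type*} [DecidableEq ι] [AddCommMonoid β]
    {D : ι → Set α} (hD : Pairwise (Function.onFun Disjoint D)) (s : Finset ι)
    (f : ι → α → β) {x : α} {k : ι} (hk : x ∈ D k) :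
    ∑ j ∈ s, (D j).indicator (f j) x = if k ∈ s then f k x else 0 := by
  have hterm : ∀ j, (D j).indicator (f j) x = if k = j then f k x else 0 := fun j => by
    split_ifs with hkj
    · subst hkj
      exact Set.indicator_of_mem hk _
    · exact Set.indicator_of_notMem (Set.disjoint_left.1 (hD hkj) hk) _
  simp only [hterm, Finset.sum_ite_eq]

theorem tendsto_apply_max_sub_apply {α E : Type*} [LinearOrder α] [TopologicalSpace α]
    [OrderTopology α] [TopologicalSpace E] [AddGroup E] [IsTopologicalAddGroup E] {f : α → E}
    (hf : ∀ s, ContinuousWithinAt f (Set.Ici s) s) {l : Filter ℕ} {b : ℕ → α} {a : α}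
    (hb : Tendsto b l (𝓝[≥] a)) (t : α) :
    Tendsto (fun n => f (max t (b n)) - f (b n)) l (𝓝 (f (max t a) - f a)) := by
  have hmax : Tendsto (max t) (𝓝[≥] a) (𝓝[≥] max t a) :=
    (continuous_const.max continuous_id).continuousWithinAt.tendsto_nhdsWithin
      fun x hx => max_le_max le_rfl hx
  exact ((hf _).tendsto.comp (hmax.comp hb)).sub ((hf a).tendsto.comp hb)

section Grid

variable {Ω : Type*}

def gridLevel (σ : Ω → ℝ≥0∞) (δ : ℝ≥0) (k : ℕ) : Set Ω :=
  {ω | σ ω ≤ ↑((k + 1 : ℝ≥0) * δ)}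

-- On `gridLevel σ δ N` this is `Y (max t τ) - Y τ`, where `τ ≥ σ` is the first grid point
-- `(k + 1) δ` above `σ`.
noncomputable def gridApprox (σ : Ω → ℝ≥0∞) (Y : ℝ≥0 → Ω → ℝ) (δ : ℝ≥0) (N : ℕ) :
    ℝ≥0 → Ω → ℝ :=
  ∑ k ∈ Finset.Iic N, fun t => (disjointed (gridLevel σ δ) k).indicator
    fun ω => Y (max t ((k + 1) * δ)) ω - Y ((k + 1) * δ) ω

variable {σ : Ω → ℝ≥0∞} {δ : ℝ≥0}

theorem exists_mem_disjointed_gridLevel (hδ : 0 < δ) {ω : Ω} (hω : σ ω ≠ ⊤) :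
    ∃ k, ω ∈ disjointed (gridLevel σ δ) k := by
  rw [← Set.mem_iUnion, iUnion_disjointed, Set.mem_iUnion]
  obtain ⟨k, hk⟩ := exists_nat_ge ((σ ω).toNNReal / δ)
  refine ⟨k, ?_⟩
  rw [gridLevel, Set.mem_ofPred_eq, ← ENNReal.coe_toNNReal hω, ENNReal.coe_le_coe]
  calc (σ ω).toNNReal ≤ k * δ := (div_le_iff₀ hδ).1 hk
    _ ≤ (k + 1) * δ := by gcongr; exact le_self_add

theorem mem_Icc_of_mem_disjointed_gridLevel {ω : Ω} {a : ℝ≥0} (hω : σ ω = a) {k : ℕ}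
    (hk : ω ∈ disjointed (gridLevel σ δ) k) : (k + 1) * δ ∈ Set.Icc a (a + δ) := by
  have hle : ω ∈ gridLevel σ δ k := disjointed_subset _ _ hk
  simp only [gridLevel, Set.mem_ofPred_eq, hω, ENNReal.coe_le_coe] at hle
  refine ⟨hle, ?_⟩
  cases k with
  | zero => simp
  | succ j =>
    have hj : ω ∉ gridLevel σ δ j := fun hj =>
      (Nat.lt_succ_self j).not_ge (le_of_mem_disjointed_of_mem hk hj)
    simp only [gridLevel, Set.mem_ofPred_eq, hω, ENNReal.coe_le_coe, not_le] at hj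
    push_cast
    calc ((j : ℝ≥0) + 1 + 1) * δ = (j + 1) * δ + δ := by ring
      _ ≤ a + δ := by gcongr

theorem gridApprox_apply (Y : ℝ≥0 → Ω → ℝ) (N : ℕ) (t : ℝ≥0) {ω : Ω} {k : ℕ}
    (hk : ω ∈ disjointed (gridLevel σ δ) k) :
    gridApprox σ Y δ N t ω =
      if k ≤ N then Y (max t ((k + 1) * δ)) ω - Y ((k + 1) * δ) ω else 0 := by
  rw [gridApprox, Finset.sum_apply, Finset.sum_apply,
    Finset.sum_indicator_apply_of_mem (disjoint_disjointed _) _ _ hk]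
  simp only [Finset.mem_Iic]

theorem norm_gridApprox_le {Y : ℝ≥0 → Ω → ℝ} {C : ℝ} (hC : ∀ t ω, |Y t ω| ≤ C) (hδ : 0 < δ)
    (N : ℕ) (t : ℝ≥0) {ω : Ω} (hω : σ ω ≠ ⊤) : ‖gridApprox σ Y δ N t ω‖ ≤ 2 * C := by
  obtain ⟨k, hk⟩ := exists_mem_disjointed_gridLevel hδ hω
  rw [gridApprox_apply Y N t hk, Real.norm_eq_abs]
  split_ifs
  · exact (abs_sub _ _).trans (by linarith [hC (max t ((k + 1) * δ)) ω, hC ((k + 1) * δ) ω])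
  · rw [abs_zero]
    linarith [(abs_nonneg (Y t ω)).trans (hC t ω)]

theorem tendsto_gridApprox {Y : ℝ≥0 → Ω → ℝ}
    (hrc : ∀ ω, ∀ t : ℝ≥0, ContinuousWithinAt (fun s => Y s ω) (Set.Ici t) t) (t : ℝ≥0)
    {ω : Ω} {a : ℝ≥0} (hω : σ ω = a) :
    Tendsto (fun n : ℕ => gridApprox σ Y (1 / (n + 1)) (n * (n + 1)) t ω) atTop
      (𝓝 (Y (max t a) ω - Y a ω)) := by
  choose k hk using fun n : ℕ =>
    exists_mem_disjointed_gridLevel (δ := 1 / (n + 1)) (by positivity) (hω ▸ ENNReal.coe_ne_top)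
  have hb := fun n => mem_Icc_of_mem_disjointed_gridLevel hω (hk n)
  have hb_tendsto : Tendsto (fun n => (k n + 1) * (1 / (n + 1) : ℝ≥0)) atTop (𝓝[≥] a) := by
    refine tendsto_nhdsWithin_iff.2 ⟨?_, Eventually.of_forall fun n => (hb n).1⟩
    have hδ : Tendsto (fun n : ℕ => a + 1 / (n + 1)) atTop (𝓝 a) := by
      simpa using tendsto_one_div_add_atTop_nhds_zero_nat.const_add a
    exact tendsto_of_tendsto_of_tendsto_of_le_of_le tendsto_const_nhds hδ
      (fun n => (hb n).1) (fun n => (hb n).2)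
  refine (tendsto_apply_max_sub_apply (hrc ω) hb_tendsto t).congr' ?_
  filter_upwards [eventually_ge_atTop ⌈a⌉₊] with n hn
  rw [gridApprox_apply Y _ t (hk n), if_pos]
  refine le_of_mem_disjointed_of_mem (hk n) ?_
  simp only [gridLevel, Set.mem_ofPred_eq, hω, ENNReal.coe_le_coe]
  calc a ≤ n := Nat.ceil_le.1 hn
    _ ≤ (↑(n * (n + 1)) + 1) * (1 / (n + 1)) := by
      rw [mul_one_div, le_div_iff₀ (by positivity)]
      push_cast
      exact le_self_add

end Grid

section GridMartingale

variable {Ω : Type*} {m : MeasurableSpace Ω} {Q : Measure Ω} [IsFiniteMeasure Q]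
  {𝒢 : Filtration ℝ≥0 m} {σ : Ω → ℝ≥0∞} {Y : ℝ≥0 → Ω → ℝ}

theorem measurableSet_disjointed_gridLevel
    (hστ : ∀ t : ℝ≥0, MeasurableSet[𝒢 t] {ω | σ ω ≤ t}) (δ : ℝ≥0) (k : ℕ) :
    MeasurableSet[𝒢 ((k + 1) * δ)] (disjointed (gridLevel σ δ) k) := by
  rw [disjointed_eq_inter_compl]
  refine (hστ _).inter (.iInter fun j => .iInter fun hj => (𝒢.mono ?_ _ (hστ _)).compl)
  gcongr

theorem martingale_gridApprox (hστ : ∀ t : ℝ≥0, MeasurableSet[𝒢 t] {ω | σ ω ≤ t})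
    (hmart : ∀ u : ℝ≥0, 0 < u →
      Martingale (fun t ω => Set.indicator {ω' | σ ω' ≤ (u : ℝ≥0∞)}
        (fun ω' => Y (max t u) ω' - Y u ω') ω) 𝒢 Q)
    {δ : ℝ≥0} (hδ : 0 < δ) (N : ℕ) : Martingale (gridApprox σ Y δ N) 𝒢 Q := by
  refine martingale_finset_sum fun k _ => ?_
  convert (hmart ((k + 1) * δ) (by positivity)).indicator_of_forall_le_eq_zero (fun t ht => ?_)
    (measurableSet_disjointed_gridLevel hστ δ k) using 2 with t
  · rw [Set.indicator_indicator]
    exact congrArg₂ _ (Set.inter_eq_left.2 (disjointed_subset (gridLevel σ δ) k)).symm rfl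
  · funext ω
    simp [max_eq_right ht]

end GridMartingale

theorem stmt_16_general {Ω : Type*} {m : MeasurableSpace Ω}
    (Q : Measure Ω) [IsProbabilityMeasure Q]
    (𝒢 : Filtration NNReal m)
    (σ : Ω → ENNReal)
    (hστ : ∀ t : NNReal, MeasurableSet[𝒢 t] {ω | σ ω ≤ (t : ENNReal)})
    (hσfin : ∀ᵐ ω ∂Q, σ ω ≠ ⊤)
    (Y : NNReal → Ω → ℝ)
    (hbdd : ∃ C : ℝ, ∀ t ω, |Y t ω| ≤ C)
    (hprog : ProgMeasurable 𝒢 Y)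
    (hrc : ∀ ω, ∀ t : NNReal, ContinuousWithinAt (fun s => Y s ω) (Set.Ici t) t)
    (hmart : ∀ u : NNReal, 0 < u →
      Martingale (fun t ω => Set.indicator {ω' | σ ω' ≤ (u : ENNReal)}
        (fun ω' => Y (max t u) ω' - Y u ω') ω) 𝒢 Q) :
    ∃ V : NNReal → Ω → ℝ,
      (∀ t : NNReal,
        V t =ᵐ[Q] fun ω => Y (max t (σ ω).toNNReal) ω - Y ((σ ω).toNNReal) ω) ∧
      Martingale V 𝒢 Q := by
  obtain ⟨C, hC⟩ := hbdd
  have hV : ∀ t ω, σ ω ≠ ⊤ → Y t ω - stoppedProcess Y σ t ω =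
      Y (max t (σ ω).toNNReal) ω - Y (σ ω).toNNReal ω := fun t ω hω =>
    sub_stoppedProcess_eq_of_eq_coe (ENNReal.coe_toNNReal hω).symm t
  refine ⟨fun t ω => Y t ω - stoppedProcess Y σ t ω, fun t => hσfin.mono (hV t), ?_⟩
  have hδ : ∀ n : ℕ, (0 : ℝ≥0) < 1 / (n + 1) := fun n => by positivity
  refine martingale_of_tendsto (fun n => martingale_gridApprox hστ hmart (hδ n) (n * (n + 1)))
    ((IsStronglyProgressive.stronglyAdapted hprog).sub
      (IsStronglyProgressive.stronglyAdapted_stoppedProcess hprog hστ))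
    (fun n t => hσfin.mono fun ω hω => norm_gridApprox_le hC (hδ n) _ t hω)
    (fun t => hσfin.mono fun ω hω => ?_)
  rw [hV t ω hω]
  exact tendsto_gridApprox hrc t (ENNReal.coe_toNNReal hω).symm

/-- Let `Q` be a probability measure, `(𝒢 t)` a filtration, and `σ` a
`(𝒢 t)`-stopping time with `Q(σ < ∞) = 1`.  Let `Y` be a bounded,
`(𝒢 t)`-progressively measurable process with right-continuous sample paths such that
for every `u > 0` the process `t ↦ 1_{σ≤u}·(Y_{t∨u} − Y_u)` is a `(Q, 𝒢 t)`-martingale.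
Then the process `t ↦ Y_{t∨σ} − Y_σ` is a `(Q, 𝒢 t)`-martingale (up to modification on
the `Q`-null set `{σ = ∞}`, where `Y_{t∨σ} − Y_σ` is read via `σ.toNNReal`). -/
theorem stmt_16 {Ω : Type*} {m : MeasurableSpace Ω}
    (Q : Measure Ω) [IsProbabilityMeasure Q]
    (𝒢 : Filtration NNReal m)
    (σ : Ω → ENNReal) (hσ : Measurable σ)
    (hστ : ∀ t : NNReal, MeasurableSet[𝒢 t] {ω | σ ω ≤ (t : ENNReal)})
    (hσfin : ∀ᵐ ω ∂Q, σ ω ≠ ⊤)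
    (Y : NNReal → Ω → ℝ)
    (hbdd : ∃ C : ℝ, ∀ t ω, |Y t ω| ≤ C)
    (hprog : ProgMeasurable 𝒢 Y)
    (hrc : ∀ ω, ∀ t : NNReal, ContinuousWithinAt (fun s => Y s ω) (Set.Ici t) t)
    (hmart : ∀ u : NNReal, 0 < u →
      Martingale (fun t ω => Set.indicator {ω' | σ ω' ≤ (u : ENNReal)}
        (fun ω' => Y (max t u) ω' - Y u ω') ω) 𝒢 Q) :
    ∃ V : NNReal → Ω → ℝ,
      (∀ t : NNReal,
        V t =ᵐ[Q] fun ω => Y (max t (σ ω).toNNReal) ω - Y ((σ ω).toNNReal) ω) ∧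
      Martingale V 𝒢 Q :=
  stmt_16_general Q 𝒢 σ hστ hσfin Y hbdd hprog hrc hmart
end

section
/- Let (Y_t)_{t≥0} be a nonnegative (F_t)-adapted process with continuous sample paths such that Y_t = M_t + F_t for all t, where (M_t) is an (F_t)-martingale with M_0 = 0 that converges P-a.s. and in L¹ to a random variable M_∞, and (F_t) is an (F_t)-adapted process whose sample paths are continuous and nondecreasing with F_0 = 0 and P-integrable limit F_∞. Set Y_∞ := M_∞ + F_∞ and assume P(Y_∞ = 0) = 0 and that the Lebesgue–Stieltjes measure dF is P-a.s. carried by the zero set of Y, i.e. ∫_{(0,∞)} 1_{{Y_u > 0}} dF_u = 0 P-a.s. Define σ := sup{t ≥ 0 : Y_t = 0} (the set contains 0 since Y_0 = 0). Then for every t ≥ 0, P-almost surely, Y_t = E^P[Y_∞ · 1_{σ ≤ t} | F_t]. -/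
/-!
On `{σ ≤ t}` the path `Y` has no zero after `t`, so `dF` does not charge `(t, ∞)` and
`F_∞ = F_t`. Hence `Y_∞ 1_{σ ≤ t} = (M_∞ + F_t) - 1_S (M_∞ + F_t)`, where `S` is the event that
`Y` vanishes somewhere after `t`, and since `E[M_∞ + F_t | ℱ_t] = Y_t` it remains to see that
`1_S (M_∞ + F_t)` integrates to `0` over every `A ∈ ℱ_t`. Approximating `S` by the events that
`Y` vanishes in `[q, n]`, with `q ↓ t` and `n ↑ ∞`, this reduces to
`∫_{A ∩ {τ ≤ n}} (M_n + F_q) = 0` for the first zero `τ` of `Y` after `q`. That is optional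
stopping: `E[M_n; τ ≤ n] = E[Y_τ - F_τ; τ ≤ n] = -E[F_q; τ ≤ n]`, because `Y_τ = 0` and `F` is
flat on `[q, τ]`, `dF` being carried by the zeros of `Y`. The stopping is carried out along the
grid approximations `τ_k ↓ τ`, with the uniform integrability of `Y_{τ_k}` supplied by the
submartingale `Y`.
-/

open MeasureTheory Filter Set Topology TopologicalSpace
open scoped NNReal ENNReal

/-- Zeros of a continuous path on `[q, s]` are detected along this countable set, which keeps
the hitting events measurable; `q` itself is included for the degenerate interval `q = s`. -/
def probeSet (q s : ℝ≥0) : Set ℝ≥0 := insert q (range (denseSeq ℝ≥0) ∩ Icc q s)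

def HitsZero (y : ℝ≥0 → ℝ) (q s : ℝ≥0) : Prop :=
  ⨅ u ∈ probeSet q s, ENNReal.ofReal (y u) = 0

section Paths

variable {y : ℝ≥0 → ℝ} {q r s : ℝ≥0}

lemma countable_probeSet (q s : ℝ≥0) : (probeSet q s).Countable :=
  ((countable_range _).mono inter_subset_left).insert q

lemma probeSet_subset_Icc (h : q ≤ s) : probeSet q s ⊆ Icc q s :=
  insert_subset ⟨le_rfl, h⟩ inter_subset_right

lemma Icc_subset_closure_probeSet : Icc q s ⊆ closure (probeSet q s) := by
  rintro u ⟨hqu, hus⟩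
  rcases hqu.eq_or_lt with rfl | hqu
  · exact subset_closure (mem_insert _ _)
  have hu : u ∈ closure (Ioo q u) := by rw [closure_Ioo hqu.ne]; exact ⟨hqu.le, le_rfl⟩
  refine closure_mono ?_ (closure_minimal
    ((denseRange_denseSeq ℝ≥0).open_subset_closure_inter isOpen_Ioo) isClosed_closure hu)
  exact fun v ⟨hv, hvD⟩ => mem_insert_of_mem _ ⟨hvD, hv.1.le, hv.2.le.trans hus⟩

lemma HitsZero.mono (h : HitsZero y q r) (hrs : r ≤ s) : HitsZero y q s :=
  le_antisymm (h ▸ biInf_mono (insert_subset_insert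
    (inter_subset_inter_right _ (Icc_subset_Icc_right hrs)))) bot_le

lemma hitsZero_iff (hc : Continuous y) (hnn : ∀ u, 0 ≤ y u) (hqs : q ≤ s) :
    HitsZero y q s ↔ ∃ u ∈ Icc q s, y u = 0 := by
  have hf : Continuous fun u => ENNReal.ofReal (y u) := ENNReal.continuous_ofReal.comp hc
  constructor
  · intro h
    obtain ⟨u, hu, hmin⟩ := isCompact_Icc.exists_isMinOn (nonempty_Icc.2 hqs) hf.continuousOn
    have : ENNReal.ofReal (y u) ≤ 0 :=
      h ▸ le_iInf₂ fun v hv => hmin (probeSet_subset_Icc hqs hv)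
    exact ⟨u, hu, le_antisymm (ENNReal.ofReal_eq_zero.1 (nonpos_iff_eq_zero.1 this)) (hnn u)⟩
  · rintro ⟨u, hu, hyu⟩
    -- the infimum over the probes is still a lower bound at limits of probes
    have hclosed : IsClosed {v | ⨅ w ∈ probeSet q s, ENNReal.ofReal (y w) ≤
        ENNReal.ofReal (y v)} := isClosed_le continuous_const hf
    have hsub : probeSet q s ⊆ {v | ⨅ w ∈ probeSet q s, ENNReal.ofReal (y w) ≤
        ENNReal.ofReal (y v)} := fun v hv => biInf_le (fun w => ENNReal.ofReal (y w)) hv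
    have := hclosed.closure_subset_iff.2 hsub (Icc_subset_closure_probeSet hu)
    rwa [mem_ofPred_eq, hyu, ENNReal.ofReal_zero, nonpos_iff_eq_zero] at this

lemma measurableSet_hitsZero {Ω : Type*} {m : MeasurableSpace Ω} {ℱ : Filtration ℝ≥0 m}
    {Y : ℝ≥0 → Ω → ℝ} (hY : ∀ u, StronglyMeasurable[ℱ u] (Y u)) (hqs : q ≤ s) :
    MeasurableSet[ℱ s] {ω | HitsZero (fun u => Y u ω) q s} :=
  measurableSet_eq_fun (Measurable.biInf _ (countable_probeSet q s) fun u hu =>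
    ((hY u).mono (ℱ.mono (probeSet_subset_Icc hqs hu).2)).measurable.ennreal_ofReal)
    measurable_const

noncomputable def firstZeroAfter (y : ℝ≥0 → ℝ) (q : ℝ≥0) : ℝ≥0 := sInf {u | q ≤ u ∧ y u = 0}

lemma firstZeroAfter_le {u : ℝ≥0} (hqu : q ≤ u) (hu : y u = 0) : firstZeroAfter y q ≤ u :=
  csInf_le (OrderBot.bddBelow _) ⟨hqu, hu⟩

lemma firstZeroAfter_spec (hc : Continuous y) (h : ∃ u, q ≤ u ∧ y u = 0) :
    q ≤ firstZeroAfter y q ∧ y (firstZeroAfter y q) = 0 :=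
  (isClosed_Ici.inter (isClosed_eq hc continuous_const)).csInf_mem h (OrderBot.bddBelow _)

lemma hitsZero_iff_firstZeroAfter_le (hc : Continuous y) (hnn : ∀ u, 0 ≤ y u)
    (h : ∃ u, q ≤ u ∧ y u = 0) (hqr : q ≤ r) :
    HitsZero y q r ↔ firstZeroAfter y q ≤ r := by
  rw [hitsZero_iff hc hnn hqr]
  constructor
  · rintro ⟨u, hu, hyu⟩
    exact (firstZeroAfter_le hu.1 hyu).trans hu.2
  · intro hr
    obtain ⟨hq, hz⟩ := firstZeroAfter_spec hc h
    exact ⟨_, ⟨hq, hr⟩, hz⟩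

lemma pos_of_lt_firstZeroAfter (hnn : ∀ u, 0 ≤ y u) {v : ℝ≥0} (hqv : q ≤ v)
    (hv : v < firstZeroAfter y q) : 0 < y v :=
  (hnn v).lt_of_ne fun h => hv.not_ge (firstZeroAfter_le hqv h.symm)

lemma sSup_zeros_le_iff {L : ℝ} (hlim : Tendsto y atTop (𝓝 L)) (hL : L ≠ 0)
    {t : ℝ≥0} : sSup {u | y u = 0} ≤ t ↔ ∀ u, t < u → y u ≠ 0 := by
  obtain ⟨T, hT⟩ := eventually_atTop.1 (hlim.eventually_ne hL)
  have hbdd : BddAbove {u | y u = 0} := ⟨T, fun u hu => not_lt.1 fun hTu => hT u hTu.le hu⟩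
  refine ⟨fun h u htu hu => ((le_csSup hbdd hu).trans h).not_gt htu, fun h => ?_⟩
  exact csSup_le' fun u hu => not_lt.1 fun htu => h u htu hu

end Paths

section Stieltjes

variable {μ : Measure ℝ≥0} {f y : ℝ≥0 → ℝ}

lemma eq_of_measure_Ioc_eq_zero
    (hμ : ∀ a b, a ≤ b → μ (Ioc a b) = ENNReal.ofReal (f b - f a)) (hf : Monotone f)
    {a b : ℝ≥0} (hab : a ≤ b) (h : μ (Ioc a b) = 0) : f b = f a := by
  rw [hμ a b hab, ENNReal.ofReal_eq_zero, sub_nonpos] at h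
  exact le_antisymm h (hf hab)

lemma measure_singleton_eq_zero_of_continuous
    (hμ : ∀ a b, a ≤ b → μ (Ioc a b) = ENNReal.ofReal (f b - f a)) (hf : Continuous f)
    {r : ℝ≥0} (hr : 0 < r) : μ {r} = 0 := by
  have : (𝓝[<] r).NeBot := nhdsLT_neBot_of_exists_lt ⟨0, hr⟩
  have hlim : Tendsto (fun a => ENNReal.ofReal (f r - f a)) (𝓝[<] r) (𝓝 0) := by
    have := ((hf.tendsto r).mono_left (nhdsWithin_le_nhds (s := Iio r))).const_sub (f r)
    simpa [Function.comp_def] using (ENNReal.continuous_ofReal.tendsto _).comp this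
  refine le_antisymm (ge_of_tendsto hlim ?_) bot_le
  filter_upwards [self_mem_nhdsWithin] with a (ha : a < r)
  exact hμ a r ha.le ▸ measure_mono (singleton_subset_iff.2 ⟨ha, le_rfl⟩)

lemma eq_of_pos_on_Ioo_of_measure_pos_eq_zero
    (hμ : ∀ a b, a ≤ b → μ (Ioc a b) = ENNReal.ofReal (f b - f a)) (hf : Continuous f)
    (hmono : Monotone f) (hcar : μ {u | 0 < y u} = 0) {a b : ℝ≥0} (hab : a ≤ b)
    (hpos : ∀ v ∈ Ioo a b, 0 < y v) : f b = f a := by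
  rcases hab.eq_or_lt with rfl | hab'
  · rfl
  refine eq_of_measure_Ioc_eq_zero hμ hmono hab (measure_mono_null ?_ (measure_union_null hcar
    (measure_singleton_eq_zero_of_continuous hμ hf (bot_le.trans_lt hab'))))
  intro v ⟨hav, hvb⟩
  rcases hvb.lt_or_eq with hvb | rfl
  · exact Or.inl (hpos v ⟨hav, hvb⟩)
  · exact Or.inr rfl

lemma eq_of_tendsto_of_pos_on_Ioi_of_measure_pos_eq_zero
    (hμ : ∀ a b, a ≤ b → μ (Ioc a b) = ENNReal.ofReal (f b - f a)) (hmono : Monotone f)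
    (hcar : μ {u | 0 < y u} = 0) {c : ℝ} (hlim : Tendsto f atTop (𝓝 c)) {t : ℝ≥0}
    (hpos : ∀ v, t < v → 0 < y v) : c = f t := by
  refine tendsto_nhds_unique hlim (tendsto_const_nhds.congr' ?_)
  filter_upwards [eventually_ge_atTop t] with u htu
  exact (eq_of_measure_Ioc_eq_zero hμ hmono htu
    (measure_mono_null (fun v hv => hpos v hv.1) hcar)).symm

end Stieltjes

section Martingales

lemma submartingale_of_monotone {Ω ι : Type*} [Preorder ι] {m : MeasurableSpace Ω}
    {μ : Measure Ω} [IsFiniteMeasure μ] {ℱ : Filtration ι m} {F : ι → Ω → ℝ}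
    (hF : ∀ t, StronglyMeasurable[ℱ t] (F t)) (hFint : ∀ t, Integrable (F t) μ)
    (hmono : ∀ᵐ ω ∂μ, Monotone (F · ω)) : Submartingale F ℱ μ :=
  submartingale_of_setIntegral_le hF hFint fun _ _ hij _ _ =>
    setIntegral_mono_ae (hFint _).integrableOn (hFint _).integrableOn
      (hmono.mono fun _ h => h hij)

lemma MeasureTheory.Martingale.setIntegral_eq_of_tendsto_L1 {Ω ι : Type*} [SemilatticeSup ι]
    [Nonempty ι] {m : MeasurableSpace Ω} {μ : Measure Ω} {ℱ : Filtration ι m}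
    [SigmaFiniteFiltration μ ℱ] {M : ι → Ω → ℝ} (hM : Martingale M ℱ μ) {Minf : Ω → ℝ}
    (hMinf : Integrable Minf μ) (hL1 : Tendsto (fun t => ∫ ω, |M t ω - Minf ω| ∂μ) atTop (𝓝 0))
    {t : ι} {s : Set Ω} (hs : MeasurableSet[ℱ t] s) :
    ∫ ω in s, Minf ω ∂μ = ∫ ω in s, M t ω ∂μ := by
  have hlim : Tendsto (fun u => ∫⁻ ω, ‖M u ω - Minf ω‖ₑ ∂μ) atTop (𝓝 0) := by
    have := (ENNReal.continuous_ofReal.tendsto 0).comp hL1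
    rw [ENNReal.ofReal_zero] at this
    refine this.congr fun u => ?_
    simp only [Function.comp_apply, ← Real.norm_eq_abs]
    exact ofReal_integral_norm_eq_lintegral_enorm ((hM.integrable u).sub hMinf)
  refine tendsto_nhds_unique (tendsto_setIntegral_of_L1 Minf hMinf.aestronglyMeasurable
    (.of_forall hM.integrable) hlim s) (tendsto_const_nhds.congr' ?_)
  filter_upwards [eventually_ge_atTop t] with u htu
  exact hM.setIntegral_eq htu hs

end Martingales

section FirstEntrance

variable {Ω : Type*} {C : ℕ → Set Ω} {ω : Ω} {i : ℕ}

/-- Equal to `0` (as `sInf ∅ = 0`) when `ω` lies in no `C i`. -/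
noncomputable def firstEntrance (C : ℕ → Set Ω) (ω : Ω) : ℕ := sInf {i | ω ∈ C i}

lemma firstEntrance_eq_of_mem_disjointed (h : ω ∈ disjointed C i) : firstEntrance C ω = i := by
  simp only [disjointed_eq_inter_compl, mem_inter_iff, mem_iInter, mem_compl_iff] at h
  exact le_antisymm (Nat.sInf_le h.1) (le_csInf ⟨i, h.1⟩ fun j hj => not_lt.1 (h.2 j · hj))

lemma inter_eq_biUnion_inter_disjointed (hC : Monotone C) (s : Set Ω) (N : ℕ) :
    s ∩ C N = ⋃ i ∈ Finset.range (N + 1), s ∩ disjointed C i := by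
  rw [← inter_iUnion₂, biUnion_range_succ_disjointed, hC.partialSups_eq]

variable [MeasurableSpace Ω] {μ : Measure Ω} {s : Set Ω} {X : ℕ → Ω → ℝ}

lemma integrableOn_firstEntrance (hC : Monotone C) (hCm : ∀ i, MeasurableSet (C i))
    (hs : MeasurableSet s) (hX : ∀ i, Integrable (X i) μ) (N : ℕ) :
    IntegrableOn (fun ω => X (firstEntrance C ω) ω) (s ∩ C N) μ := by
  rw [inter_eq_biUnion_inter_disjointed hC]
  refine integrableOn_finset_iUnion.2 fun i _ => (hX i).integrableOn.congr_fun
    (fun ω hω => ?_) (hs.inter (.disjointed hCm i))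
  rw [firstEntrance_eq_of_mem_disjointed hω.2]

lemma setIntegral_firstEntrance_eq_sum (hC : Monotone C) (hCm : ∀ i, MeasurableSet (C i))
    (hs : MeasurableSet s) (hX : ∀ i, Integrable (X i) μ) (N : ℕ) :
    ∫ ω in s ∩ C N, X (firstEntrance C ω) ω ∂μ =
      ∑ i ∈ Finset.range (N + 1), ∫ ω in s ∩ disjointed C i, X i ω ∂μ := by
  have hm : ∀ i, MeasurableSet (s ∩ disjointed C i) := fun i => hs.inter (.disjointed hCm i)
  rw [inter_eq_biUnion_inter_disjointed hC, integral_biUnion_finset _ (fun i _ => hm i)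
    (fun i _ j _ hij => (disjoint_disjointed C hij).mono inter_subset_right inter_subset_right)
    fun i _ => (integrableOn_firstEntrance hC hCm hs hX N).mono_set
      (inter_eq_biUnion_inter_disjointed hC s N ▸
        subset_biUnion_of_mem (u := fun i => s ∩ disjointed C i) ‹_›)]
  refine Finset.sum_congr rfl fun i _ => setIntegral_congr_fun (hm i) fun ω hω => ?_
  rw [firstEntrance_eq_of_mem_disjointed hω.2]

variable {ι : Type*} [Preorder ι] {ℱ : Filtration ι ‹MeasurableSpace Ω›} {t : ℕ → ι} {n : ι}

lemma measurableSet_disjointed_of_adapted (ht : Monotone t)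
    (hCm : ∀ i, MeasurableSet[ℱ (t i)] (C i)) (i : ℕ) :
    MeasurableSet[ℱ (t i)] (disjointed C i) := by
  rw [disjointed_eq_inter_compl]
  exact (hCm i).inter (.biInter (to_countable _) fun j hj =>
    (ℱ.mono (ht (le_of_lt hj)) _ (hCm j)).compl)

variable [SigmaFiniteFiltration μ ℱ] {A : Set Ω}

lemma MeasureTheory.Submartingale.setIntegral_firstEntrance_le {X : ι → Ω → ℝ}
    (hX : Submartingale X ℱ μ) (ht : Monotone t) (htn : ∀ i, t i ≤ n) (hC : Monotone C)
    (hCm : ∀ i, MeasurableSet[ℱ (t i)] (C i)) (hA : MeasurableSet[ℱ (t 0)] A) (N : ℕ) :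
    ∫ ω in A ∩ C N, X (t (firstEntrance C ω)) ω ∂μ ≤ ∫ ω in A ∩ C N, X n ω ∂μ := by
  have hCm' i : MeasurableSet (C i) := ℱ.le _ _ (hCm i)
  have hAm : MeasurableSet A := ℱ.le _ _ hA
  rw [setIntegral_firstEntrance_eq_sum (X := fun i => X (t i)) hC hCm' hAm
      (fun _ => hX.integrable _),
    setIntegral_firstEntrance_eq_sum (X := fun _ => X n) hC hCm' hAm (fun _ => hX.integrable n)]
  exact Finset.sum_le_sum fun i _ => hX.setIntegral_le (htn i)
    ((ℱ.mono (ht (Nat.zero_le i)) _ hA).inter (measurableSet_disjointed_of_adapted ht hCm i))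

lemma MeasureTheory.Martingale.setIntegral_firstEntrance {M : ι → Ω → ℝ}
    (hM : Martingale M ℱ μ) (ht : Monotone t) (htn : ∀ i, t i ≤ n) (hC : Monotone C)
    (hCm : ∀ i, MeasurableSet[ℱ (t i)] (C i)) (hA : MeasurableSet[ℱ (t 0)] A) (N : ℕ) :
    ∫ ω in A ∩ C N, M (t (firstEntrance C ω)) ω ∂μ = ∫ ω in A ∩ C N, M n ω ∂μ := by
  have hCm' i : MeasurableSet (C i) := ℱ.le _ _ (hCm i)
  have hAm : MeasurableSet A := ℱ.le _ _ hA
  rw [setIntegral_firstEntrance_eq_sum (X := fun i => M (t i)) hC hCm' hAm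
      (fun _ => hM.integrable _),
    setIntegral_firstEntrance_eq_sum (X := fun _ => M n) hC hCm' hAm (fun _ => hM.integrable n)]
  exact Finset.sum_congr rfl fun i _ => hM.setIntegral_eq (htn i)
    ((ℱ.mono (ht (Nat.zero_le i)) _ hA).inter (measurableSet_disjointed_of_adapted ht hCm i))

end FirstEntrance

section Grid

noncomputable def gridTime (q n : ℝ≥0) (k i : ℕ) : ℝ≥0 := min (q + i * ((n - q) / (k + 1))) n

variable {q n : ℝ≥0} {k : ℕ}

lemma gridTime_mono : Monotone (gridTime q n k) := fun i j hij => by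
  unfold gridTime; gcongr

lemma gridTime_mem_Icc (hqn : q ≤ n) (i : ℕ) : gridTime q n k i ∈ Icc q n :=
  ⟨le_min le_self_add hqn, min_le_right _ _⟩

lemma gridTime_zero (hqn : q ≤ n) : gridTime q n k 0 = q := by
  simp [gridTime, hqn]

lemma gridTime_last (hqn : q ≤ n) : gridTime q n k (k + 1) = n := by
  rw [gridTime, Nat.cast_succ, mul_div_cancel₀ _ (Nat.cast_add_one_ne_zero k),
    add_tsub_cancel_of_le hqn, min_self]

lemma gridTime_succ_le (i : ℕ) :
    gridTime q n k (i + 1) ≤ gridTime q n k i + (n - q) / (k + 1) := by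
  rw [gridTime, gridTime, ← min_add_add_right, Nat.cast_succ, add_one_mul, ← add_assoc]
  exact min_le_min_left _ le_self_add

lemma tendsto_gridMesh (q n : ℝ≥0) : Tendsto (fun k : ℕ => (n - q) / (k + 1)) atTop (𝓝 0) := by
  simpa [Function.comp_def] using
    (tendsto_const_div_atTop_nhds_zero_nat (n - q)).comp (tendsto_add_atTop_nat 1)

lemma apply_sInf_le_mem_Icc {t : ℕ → ℝ≥0} {z h : ℝ≥0} (h0 : t 0 ≤ z)
    (hstep : ∀ i, t (i + 1) ≤ t i + h) (hex : ∃ i, z ≤ t i) :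
    t (sInf {i | z ≤ t i}) ∈ Icc z (z + h) := by
  refine ⟨Nat.sInf_mem hex, ?_⟩
  rcases Nat.eq_zero_or_eq_succ_pred (sInf {i | z ≤ t i}) with h' | h'
  · rw [h']; exact h0.trans le_self_add
  · rw [h']
    have := Nat.notMem_of_lt_sInf (h' ▸ Nat.lt_succ_self _ : (sInf {i | z ≤ t i}).pred < _)
    exact (hstep _).trans (add_le_add_left (not_le.1 this).le _)

end Grid

section UniformIntegrability

variable {α : Type*} [MeasurableSpace α] {μ : Measure α} [IsFiniteMeasure μ]

lemma tendsto_integral_posPart_sub_nat {Z : α → ℝ} (hZ : Integrable Z μ) :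
    Tendsto (fun c : ℕ => ∫ ω, (Z ω - c)⁺ ∂μ) atTop (𝓝 0) := by
  have := tendsto_integral_of_dominated_convergence (F := fun (c : ℕ) ω => (Z ω - c)⁺)
    (f := fun _ => 0) (fun ω => |Z ω|)
    (fun c : ℕ => (hZ.sub (integrable_const (c : ℝ))).pos_part.aestronglyMeasurable) hZ.abs
    (fun c => Eventually.of_forall fun ω => ?_) (Eventually.of_forall fun ω => ?_)
  · simpa using this
  · rw [Real.norm_eq_abs, abs_of_nonneg (posPart_nonneg _), posPart_def]
    exact sup_le ((sub_le_self _ c.cast_nonneg).trans (le_abs_self _)) (abs_nonneg _)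
  · refine tendsto_const_nhds.congr' ?_
    filter_upwards [tendsto_natCast_atTop_atTop.eventually_ge_atTop (Z ω)] with c hc
    exact (posPart_eq_zero.2 (sub_nonpos.2 hc)).symm

/-- Vitali's convergence theorem, with uniform integrability expressed through the tails. -/
lemma eq_zero_of_tendsto_integral_of_tail_le {X : ℕ → α → ℝ} (hX : ∀ k, Integrable (X k) μ)
    (hnn : ∀ k, 0 ≤ᵐ[μ] X k) (hlim : ∀ᵐ ω ∂μ, Tendsto (X · ω) atTop (𝓝 0)) {T : ℝ}
    (hT : Tendsto (fun k => ∫ ω, X k ω ∂μ) atTop (𝓝 T)) {δ : ℕ → ℝ}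
    (hδ : Tendsto δ atTop (𝓝 0)) (htail : ∀ (c : ℕ) k, ∫ ω, (X k ω - c)⁺ ∂μ ≤ δ c) :
    T = 0 := by
  refine le_antisymm (ge_of_tendsto hδ (Eventually.of_forall fun c => ?_))
    (ge_of_tendsto hT (Eventually.of_forall fun k => integral_nonneg_of_ae (hnn k)))
  have hmin k : Integrable (fun ω => min (X k ω) c) μ := (hX k).inf (integrable_const _)
  have htrunc : Tendsto (fun k => ∫ ω, min (X k ω) c ∂μ) atTop (𝓝 0) := by
    have := tendsto_integral_of_dominated_convergence (F := fun k ω => min (X k ω) c)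
      (f := fun _ => 0) (fun _ => (c : ℝ)) (fun k => (hmin k).aestronglyMeasurable)
      (integrable_const _) (fun k => (hnn k).mono fun ω hω => ?_) (hlim.mono fun ω hω => ?_)
    · simpa using this
    · rw [Real.norm_eq_abs, abs_of_nonneg (le_min hω c.cast_nonneg)]
      exact min_le_right _ _
    · simpa using hω.min (tendsto_const_nhds (x := (c : ℝ)))
  refine le_of_tendsto (by simpa using hT.sub htrunc) (Eventually.of_forall fun k => ?_)
  have hsplit : ∀ a : ℝ, a - min a c = (a - c)⁺ := fun a => by
    rcases le_total a c with h | h <;> simp [h, sub_nonpos.2, sub_nonneg.2]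
  rw [← integral_sub (hX k) (hmin k)]
  simpa only [hsplit] using htail c k

end UniformIntegrability

section GridHit

variable {Ω : Type*} {m : MeasurableSpace Ω} {ℱ : Filtration ℝ≥0 m} {μ : Measure Ω}
  {Y : ℝ≥0 → Ω → ℝ} {q n : ℝ≥0} {k : ℕ} {A : Set Ω}

/-- Discrete approximation of the first zero of `Y` after `q`: the first point of the `k`-th
grid of `[q, n]` by which `Y` has vanished. -/
noncomputable def gridHit (Y : ℝ≥0 → Ω → ℝ) (q n : ℝ≥0) (k : ℕ) (ω : Ω) : ℝ≥0 :=
  gridTime q n k (firstEntrance (fun i => {ω | HitsZero (Y · ω) q (gridTime q n k i)}) ω)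

lemma gridHit_mem_Icc (hqn : q ≤ n) (ω : Ω) : gridHit Y q n k ω ∈ Icc q n :=
  gridTime_mem_Icc hqn _

lemma monotone_setOf_hitsZero_gridTime :
    Monotone fun i => {ω | HitsZero (Y · ω) q (gridTime q n k i)} :=
  fun _ _ hij _ hω => HitsZero.mono hω (gridTime_mono hij)

lemma setOf_hitsZero_eq_gridTime_last (hqn : q ≤ n) :
    {ω | HitsZero (Y · ω) q n} = {ω | HitsZero (Y · ω) q (gridTime q n k (k + 1))} := by
  rw [gridTime_last hqn]

lemma integrableOn_gridHit (hY : ∀ t, StronglyMeasurable[ℱ t] (Y t)) (hqn : q ≤ n)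
    (hA : MeasurableSet A) {X : ℝ≥0 → Ω → ℝ} (hX : ∀ t, Integrable (X t) μ) (k : ℕ) :
    IntegrableOn (fun ω => X (gridHit Y q n k ω) ω) (A ∩ {ω | HitsZero (Y · ω) q n}) μ := by
  rw [setOf_hitsZero_eq_gridTime_last (k := k) hqn]
  exact integrableOn_firstEntrance (X := fun i => X (gridTime q n k i))
    monotone_setOf_hitsZero_gridTime
    (fun i => ℱ.le _ _ (measurableSet_hitsZero hY (gridTime_mem_Icc hqn i).1)) hA
    (fun _ => hX _) (k + 1)

variable [SigmaFiniteFiltration μ ℱ]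

lemma MeasureTheory.Submartingale.setIntegral_gridHit_le {X : ℝ≥0 → Ω → ℝ}
    (hX : Submartingale X ℱ μ) (hY : ∀ t, StronglyMeasurable[ℱ t] (Y t)) (hqn : q ≤ n)
    (hA : MeasurableSet[ℱ q] A) (k : ℕ) :
    ∫ ω in A ∩ {ω | HitsZero (Y · ω) q n}, X (gridHit Y q n k ω) ω ∂μ ≤
      ∫ ω in A ∩ {ω | HitsZero (Y · ω) q n}, X n ω ∂μ := by
  rw [setOf_hitsZero_eq_gridTime_last (k := k) hqn]
  exact hX.setIntegral_firstEntrance_le gridTime_mono (fun i => (gridTime_mem_Icc hqn i).2)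
    monotone_setOf_hitsZero_gridTime
    (fun i => measurableSet_hitsZero hY (gridTime_mem_Icc hqn i).1)
    (by rwa [gridTime_zero hqn]) (k + 1)

lemma MeasureTheory.Martingale.setIntegral_gridHit {M : ℝ≥0 → Ω → ℝ} (hM : Martingale M ℱ μ)
    (hY : ∀ t, StronglyMeasurable[ℱ t] (Y t)) (hqn : q ≤ n) (hA : MeasurableSet[ℱ q] A)
    (k : ℕ) :
    ∫ ω in A ∩ {ω | HitsZero (Y · ω) q n}, M (gridHit Y q n k ω) ω ∂μ =
      ∫ ω in A ∩ {ω | HitsZero (Y · ω) q n}, M n ω ∂μ := by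
  rw [setOf_hitsZero_eq_gridTime_last (k := k) hqn]
  exact hM.setIntegral_firstEntrance gridTime_mono (fun i => (gridTime_mem_Icc hqn i).2)
    monotone_setOf_hitsZero_gridTime
    (fun i => measurableSet_hitsZero hY (gridTime_mem_Icc hqn i).1)
    (by rwa [gridTime_zero hqn]) (k + 1)

lemma tendsto_gridHit {ω : Ω} (hc : Continuous (Y · ω)) (hnn : ∀ u, 0 ≤ Y u ω) (hqn : q ≤ n)
    (hhit : HitsZero (Y · ω) q n) :
    Tendsto (gridHit Y q n · ω) atTop (𝓝 (firstZeroAfter (Y · ω) q)) := by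
  obtain ⟨u, hu, hyu⟩ := (hitsZero_iff hc hnn hqn).1 hhit
  have hz : ∃ u, q ≤ u ∧ Y u ω = 0 := ⟨u, hu.1, hyu⟩
  have hset k : {i | ω ∈ {ω | HitsZero (Y · ω) q (gridTime q n k i)}} =
      {i | firstZeroAfter (Y · ω) q ≤ gridTime q n k i} :=
    ext fun i => hitsZero_iff_firstZeroAfter_le hc hnn hz (gridTime_mem_Icc hqn i).1
  have hbounds k := apply_sInf_le_mem_Icc (t := gridTime q n k)
    ((gridTime_zero hqn).trans_le (firstZeroAfter_spec hc hz).1) gridTime_succ_le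
    ⟨k + 1, (gridTime_last hqn).symm ▸ (firstZeroAfter_le hu.1 hyu).trans hu.2⟩
  simp only [gridHit, firstEntrance, hset]
  exact tendsto_of_tendsto_of_tendsto_of_le_of_le tendsto_const_nhds
    (by simpa using (tendsto_gridMesh q n).const_add (firstZeroAfter (Y · ω) q))
    (fun k => (hbounds k).1) (fun k => (hbounds k).2)

lemma tendsto_apply_gridHit {F : ℝ≥0 → Ω → ℝ} {ω : Ω} (hc : Continuous (Y · ω))
    (hnn : ∀ u, 0 ≤ Y u ω) (hFc : Continuous (F · ω))
    (hflat : ∀ a b, a ≤ b → (∀ v ∈ Ioo a b, 0 < Y v ω) → F b ω = F a ω) (hqn : q ≤ n)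
    (hhit : HitsZero (Y · ω) q n) :
    Tendsto (fun k => Y (gridHit Y q n k ω) ω) atTop (𝓝 0) ∧
      Tendsto (fun k => F (gridHit Y q n k ω) ω) atTop (𝓝 (F q ω)) := by
  have hτ := tendsto_gridHit hc hnn hqn hhit
  obtain ⟨u, hu, hyu⟩ := (hitsZero_iff hc hnn hqn).1 hhit
  obtain ⟨hqz, hz⟩ := firstZeroAfter_spec hc ⟨u, hu.1, hyu⟩
  refine ⟨hz ▸ (hc.tendsto _).comp hτ, ?_⟩
  rw [← hflat q _ hqz fun v hv => pos_of_lt_firstZeroAfter hnn hv.1.le hv.2]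
  exact (hFc.tendsto _).comp hτ

end GridHit

section KeyIdentity

variable {Ω : Type*} {m : MeasurableSpace Ω} {P : Measure Ω} [IsFiniteMeasure P]
  {ℱ : Filtration ℝ≥0 m} {Y M F : ℝ≥0 → Ω → ℝ}

theorem setIntegral_hitsZero_eq_zero (hY : ∀ t, StronglyMeasurable[ℱ t] (Y t))
    (hYnonneg : ∀ᵐ ω ∂P, ∀ t, 0 ≤ Y t ω) (hYcont : ∀ᵐ ω ∂P, Continuous fun t => Y t ω)
    (hdecomp : ∀ t ω, Y t ω = M t ω + F t ω) (hM : Martingale M ℱ P)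
    (hF : ∀ t, StronglyMeasurable[ℱ t] (F t)) (hFint : ∀ t, Integrable (F t) P)
    (hFmono : ∀ᵐ ω ∂P, Monotone (F · ω)) (hFcont : ∀ᵐ ω ∂P, Continuous (F · ω))
    (hFflat : ∀ᵐ ω ∂P, ∀ a b, a ≤ b → (∀ v ∈ Ioo a b, 0 < Y v ω) → F b ω = F a ω)
    {q n : ℝ≥0} (hqn : q ≤ n) {A : Set Ω} (hA : MeasurableSet[ℱ q] A) :
    ∫ ω in A ∩ {ω | HitsZero (Y · ω) q n}, (M n ω + F q ω) ∂P = 0 := by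
  have hAm : MeasurableSet A := ℱ.le q _ hA
  have hSm : MeasurableSet (A ∩ {ω | HitsZero (Y · ω) q n}) :=
    hAm.inter (ℱ.le n _ (measurableSet_hitsZero hY hqn))
  have hYint t : Integrable (Y t) P :=
    ((hM.integrable t).add (hFint t)).congr (.of_forall fun ω => (hdecomp t ω).symm)
  have hYsub : Submartingale Y ℱ P := by
    have hYeq : Y = F + M := by ext t ω; rw [hdecomp, Pi.add_apply, Pi.add_apply, add_comm]
    exact hYeq ▸ (submartingale_of_monotone hF hFint hFmono).add_martingale hM
  have hstop k : ∫ ω in A ∩ {ω | HitsZero (Y · ω) q n}, Y (gridHit Y q n k ω) ω ∂P =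
      ∫ ω in A ∩ {ω | HitsZero (Y · ω) q n}, M n ω ∂P +
        ∫ ω in A ∩ {ω | HitsZero (Y · ω) q n}, F (gridHit Y q n k ω) ω ∂P := by
    rw [← hM.setIntegral_gridHit hY hqn hA k, ← integral_add
      (integrableOn_gridHit hY hqn hAm hM.integrable k) (integrableOn_gridHit hY hqn hAm hFint k)]
    exact setIntegral_congr_fun hSm fun ω _ => hdecomp _ ω
  have htail (c : ℕ) k : ∫ ω in A ∩ {ω | HitsZero (Y · ω) q n},
      (Y (gridHit Y q n k ω) ω - c)⁺ ∂P ≤ ∫ ω, (Y n ω - c)⁺ ∂P :=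
    ((hYsub.sub_martingale (martingale_const ℱ P (c : ℝ))).pos.setIntegral_gridHit_le hY hqn hA
      k).trans (setIntegral_le_integral ((hYint n).sub (integrable_const _)).pos_part
        (.of_forall fun _ => posPart_nonneg _))
  have hlim : ∀ᵐ ω ∂P, ω ∈ A ∩ {ω | HitsZero (Y · ω) q n} →
      Tendsto (fun k => Y (gridHit Y q n k ω) ω) atTop (𝓝 0) ∧
        Tendsto (fun k => F (gridHit Y q n k ω) ω) atTop (𝓝 (F q ω)) := by
    filter_upwards [hYnonneg, hYcont, hFcont, hFflat] with ω hnn hc hFc hflat ⟨_, hhit⟩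
    exact tendsto_apply_gridHit hc hnn hFc hflat hqn hhit
  have hFlim : Tendsto (fun k => ∫ ω in A ∩ {ω | HitsZero (Y · ω) q n},
      F (gridHit Y q n k ω) ω ∂P) atTop
      (𝓝 (∫ ω in A ∩ {ω | HitsZero (Y · ω) q n}, F q ω ∂P)) := by
    refine tendsto_integral_of_dominated_convergence (fun ω => |F q ω| + |F n ω|)
      (fun k => (integrableOn_gridHit hY hqn hAm hFint k).aestronglyMeasurable)
      ((hFint q).abs.add (hFint n).abs).restrict
      (fun k => ae_restrict_of_ae (hFmono.mono fun ω hmono => ?_))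
      ((ae_restrict_iff' hSm).2 (hlim.mono fun ω h hω => (h hω).2))
    have h1 := hmono (gridHit_mem_Icc (Y := Y) (k := k) hqn ω).1
    have h2 := hmono (gridHit_mem_Icc (Y := Y) (k := k) hqn ω).2
    rw [Real.norm_eq_abs, abs_le]
    constructor <;> linarith [neg_abs_le (F q ω), le_abs_self (F n ω), abs_nonneg (F q ω),
      abs_nonneg (F n ω)]
  rw [integral_add (hM.integrable n).integrableOn (hFint q).integrableOn]
  exact eq_zero_of_tendsto_integral_of_tail_le (integrableOn_gridHit hY hqn hAm hYint)
    (fun k => ae_restrict_of_ae (hYnonneg.mono fun ω h => h _))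
    ((ae_restrict_iff' hSm).2 (hlim.mono fun ω h hω => (h hω).1))
    ((hFlim.const_add _).congr fun k => (hstop k).symm)
    (tendsto_integral_posPart_sub_nat (hYint n)) htail

end KeyIdentity

section ZerosAfter

variable {Ω : Type*} {m : MeasurableSpace Ω} {P : Measure Ω}
  {ℱ : Filtration ℝ≥0 m} {Y F : ℝ≥0 → Ω → ℝ} {Minf : Ω → ℝ} {t : ℝ≥0}

lemma tendsto_indicator_hitsZero {q : ℕ → ℝ≥0} (hq : Tendsto q atTop (𝓝 t))
    (hqt : ∀ j, t < q j) {g : ℕ → Ω → ℝ} {g' : Ω → ℝ} {ω : Ω} (hc : Continuous (Y · ω))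
    (hnn : ∀ u, 0 ≤ Y u ω) (hg : Tendsto (g · ω) atTop (𝓝 (g' ω))) :
    Tendsto (fun j => {ω | HitsZero (Y · ω) (q j) (q j + j)}.indicator (g j) ω) atTop
      (𝓝 ({ω | ∃ u, t < u ∧ Y u ω = 0}.indicator g' ω)) := by
  by_cases hS : ∃ u, t < u ∧ Y u ω = 0
  · obtain ⟨u, htu, hu⟩ := hS
    rw [indicator_of_mem (show ω ∈ {ω | ∃ u, t < u ∧ Y u ω = 0} from ⟨u, htu, hu⟩)]
    refine hg.congr' ?_
    filter_upwards [hq.eventually_lt_const htu,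
      tendsto_natCast_atTop_atTop.eventually_ge_atTop u] with j hqu hju
    refine (indicator_of_mem (show ω ∈ {ω | HitsZero (Y · ω) (q j) (q j + j)} from ?_) _).symm
    exact (hitsZero_iff hc hnn le_self_add).2 ⟨u, ⟨hqu.le, hju.trans le_add_self⟩, hu⟩
  · rw [indicator_of_notMem (show ω ∉ {ω | ∃ u, t < u ∧ Y u ω = 0} from hS)]
    refine tendsto_const_nhds.congr fun j => (indicator_of_notMem (fun hj => hS ?_) _).symm
    obtain ⟨u, hu, hyu⟩ := (hitsZero_iff hc hnn le_self_add).1 hj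
    exact ⟨u, (hqt j).trans_le hu.1, hyu⟩

theorem integrable_indicator_zerosAfter_and_setIntegral_eq_zero
    (hY : ∀ t, StronglyMeasurable[ℱ t] (Y t)) (hYnonneg : ∀ᵐ ω ∂P, ∀ t, 0 ≤ Y t ω)
    (hYcont : ∀ᵐ ω ∂P, Continuous fun t => Y t ω) (hFint : ∀ t, Integrable (F t) P)
    (hFmono : ∀ᵐ ω ∂P, Monotone (F · ω)) (hFcont : ∀ᵐ ω ∂P, Continuous (F · ω))
    (hMinf : Integrable Minf P) {A : Set Ω}
    (hkey : ∀ q n, t < q → q ≤ n →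
      ∫ ω in A ∩ {ω | HitsZero (Y · ω) q n}, (Minf ω + F q ω) ∂P = 0) :
    Integrable ({ω | ∃ u, t < u ∧ Y u ω = 0}.indicator fun ω => Minf ω + F t ω) P ∧
      ∫ ω in A, {ω | ∃ u, t < u ∧ Y u ω = 0}.indicator (fun ω => Minf ω + F t ω) ω ∂P = 0 := by
  set q : ℕ → ℝ≥0 := fun j => t + 1 / ((j : ℝ≥0) + 1)
  set E : ℕ → Set Ω := fun j => {ω | HitsZero (Y · ω) (q j) (q j + j)}
  have hqt j : t < q j := lt_add_of_pos_right t (by positivity)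
  have hq1 j : q j ≤ t + 1 := add_le_add_right (div_le_one_of_le₀ le_add_self (by positivity)) t
  have hq : Tendsto q atTop (𝓝 t) := by
    have h := (tendsto_const_nhds (x := t)).add tendsto_one_div_add_atTop_nhds_zero_nat
    rwa [add_zero] at h
  have hEm j : MeasurableSet (E j) := ℱ.le _ _ (measurableSet_hitsZero hY le_self_add)
  have hlim : ∀ᵐ ω ∂P, Tendsto (fun j => (E j).indicator (fun ω => Minf ω + F (q j) ω) ω)
      atTop (𝓝 ({ω | ∃ u, t < u ∧ Y u ω = 0}.indicator (fun ω => Minf ω + F t ω) ω)) := by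
    filter_upwards [hYnonneg, hYcont, hFcont] with ω hnn hc hFc
    exact tendsto_indicator_hitsZero hq hqt hc hnn
      (tendsto_const_nhds.add ((hFc.tendsto t).comp hq))
  have hbound j : ∀ᵐ ω ∂P, ‖(E j).indicator (fun ω => Minf ω + F (q j) ω) ω‖ ≤
      |Minf ω| + |F t ω| + |F (t + 1) ω| := by
    filter_upwards [hFmono] with ω hmono
    have h1 := hmono (hqt j).le
    have h2 := hmono (hq1 j)
    refine (norm_indicator_le_norm_self _ _).trans ?_
    rw [Real.norm_eq_abs, abs_le]
    constructor <;> linarith [neg_abs_le (Minf ω), le_abs_self (Minf ω), neg_abs_le (F t ω),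
      le_abs_self (F (t + 1) ω), abs_nonneg (F t ω), abs_nonneg (F (t + 1) ω)]
  have hmeas j : AEStronglyMeasurable ((E j).indicator (fun ω => Minf ω + F (q j) ω)) P :=
    (hMinf.add (hFint _)).aestronglyMeasurable.indicator (hEm j)
  have hbound_int : Integrable (fun ω => |Minf ω| + |F t ω| + |F (t + 1) ω|) P :=
    (hMinf.abs.add (hFint t).abs).add (hFint (t + 1)).abs
  refine ⟨hbound_int.mono' (aestronglyMeasurable_of_tendsto_ae atTop hmeas hlim)
    (.of_forall fun ω => (norm_indicator_le_norm_self _ _).trans ?_), ?_⟩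
  · rw [Real.norm_eq_abs]
    linarith [abs_add_le (Minf ω) (F t ω), abs_nonneg (F (t + 1) ω)]
  refine tendsto_nhds_unique (tendsto_integral_of_dominated_convergence _
    (fun j => (hmeas j).restrict) hbound_int.restrict
    (fun j => ae_restrict_of_ae (hbound j)) (ae_restrict_of_ae hlim))
    (tendsto_const_nhds.congr fun j => ?_)
  rw [setIntegral_indicator (hEm j)]
  exact (hkey _ _ (hqt j) le_self_add).symm

end ZerosAfter

theorem ae_eq_condExp_of_ae_eq_sub {Ω : Type*} {m : MeasurableSpace Ω} {P : Measure Ω}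
    [IsFiniteMeasure P] {ℱ : Filtration ℝ≥0 m} {Y M F : ℝ≥0 → Ω → ℝ} {Minf H G : Ω → ℝ}
    {t : ℝ≥0} (hM : Martingale M ℱ P) (hMinf : Integrable Minf P)
    (hL1 : Tendsto (fun t => ∫ ω, |M t ω - Minf ω| ∂P) atTop (𝓝 0))
    (hY : StronglyMeasurable[ℱ t] (Y t)) (hdecomp : ∀ ω, Y t ω = M t ω + F t ω)
    (hF : Integrable (F t) P) (hH : Integrable H P)
    (hH0 : ∀ s, MeasurableSet[ℱ t] s → ∫ ω in s, H ω ∂P = 0)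
    (hG : G =ᵐ[P] fun ω => Minf ω + F t ω - H ω) :
    Y t =ᵐ[P] P[G | ℱ t] := by
  have hMF : Integrable (fun ω => Minf ω + F t ω) P := hMinf.add hF
  refine ae_eq_condExp_of_forall_setIntegral_eq (ℱ.le t) ((hMF.sub hH).congr hG.symm)
    (fun s hs _ => ((hM.integrable t).add hF).integrableOn.congr_fun
      (fun ω _ => (hdecomp ω).symm) (ℱ.le t _ hs)) (fun s hs _ => ?_) hY.aestronglyMeasurable
  rw [integral_congr_ae (ae_restrict_of_ae hG), integral_sub hMF.integrableOn hH.integrableOn,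
    hH0 s hs, sub_zero, integral_add hMinf.integrableOn hF.integrableOn,
    hM.setIntegral_eq_of_tendsto_L1 hMinf hL1 hs,
    ← integral_add (hM.integrable t).integrableOn hF.integrableOn]
  simp only [hdecomp]

theorem stmt_17_general {Ω : Type*} {m : MeasurableSpace Ω}
    (P : Measure Ω) [IsProbabilityMeasure P]
    (ℱ : Filtration NNReal m)
    (Y M F : NNReal → Ω → ℝ)
    (Minf Finf : Ω → ℝ)
    (hYadapted : ∀ t : NNReal, StronglyMeasurable[ℱ t] (Y t))
    (hYnonneg : ∀ᵐ ω ∂P, ∀ t, 0 ≤ Y t ω)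
    (hYcont : ∀ᵐ ω ∂P, Continuous fun t => Y t ω)
    (hdecomp : ∀ t ω, Y t ω = M t ω + F t ω)
    (hM : Martingale M ℱ P)
    (hMinf_int : Integrable Minf P)
    (hMas : ∀ᵐ ω ∂P, Tendsto (fun t => M t ω) atTop (nhds (Minf ω)))
    (hML1 : Tendsto (fun t => ∫ ω, |M t ω - Minf ω| ∂P) atTop (nhds 0))
    (hFadapted : ∀ t : NNReal, StronglyMeasurable[ℱ t] (F t))
    (hFpath : ∀ᵐ ω ∂P, Monotone (fun t => F t ω) ∧ Continuous (fun t => F t ω) ∧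
      F 0 ω = 0 ∧ Tendsto (fun t => F t ω) atTop (nhds (Finf ω)))
    (hFinf_int : Integrable Finf P)
    (hYinf : P {ω | Minf ω + Finf ω = 0} = 0)
    (ν : Ω → Measure NNReal)
    (hν : ∀ᵐ ω ∂P, (∀ a b : NNReal, a ≤ b →
        ν ω (Set.Ioc a b) = ENNReal.ofReal (F b ω - F a ω)) ∧
      ν ω {0} = 0 ∧ ν ω Set.univ = ENNReal.ofReal (Finf ω))
    (hcarried : ∀ᵐ ω ∂P, ν ω {u | 0 < Y u ω} = 0)
    (σ : Ω → NNReal)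
    (hσdef : ∀ ω, σ ω = sSup {t : NNReal | Y t ω = 0})
    (t : NNReal) :
    Y t =ᵐ[P]
      P[fun ω => (Minf ω + Finf ω) *
        Set.indicator {ω' | σ ω' ≤ t} (fun _ => (1 : ℝ)) ω | ℱ t] := by
  have hFmono : ∀ᵐ ω ∂P, Monotone (F · ω) := hFpath.mono fun _ h => h.1
  have hFcont : ∀ᵐ ω ∂P, Continuous (F · ω) := hFpath.mono fun _ h => h.2.1
  have hFint s : Integrable (F s) P := by
    refine hFinf_int.mono' ((hFadapted s).mono (ℱ.le s)).aestronglyMeasurable ?_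
    filter_upwards [hFpath] with ω ⟨hmono, _, h0, hlim⟩
    rw [Real.norm_eq_abs, abs_of_nonneg (h0 ▸ hmono (zero_le (a := s)))]
    exact hmono.ge_of_tendsto hlim s
  have hFflat : ∀ᵐ ω ∂P, ∀ a b, a ≤ b → (∀ v ∈ Ioo a b, 0 < Y v ω) → F b ω = F a ω := by
    filter_upwards [hν, hFpath, hcarried] with ω hνω hF hcar a b hab
    exact eq_of_pos_on_Ioo_of_measure_pos_eq_zero hνω.1 hF.2.1 hF.1 hcar hab
  set S : Set Ω := {ω | ∃ u, t < u ∧ Y u ω = 0}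
  have hS s (hs : MeasurableSet[ℱ t] s) : Integrable (S.indicator fun ω => Minf ω + F t ω) P ∧
      ∫ ω in s, S.indicator (fun ω => Minf ω + F t ω) ω ∂P = 0 := by
    refine integrable_indicator_zerosAfter_and_setIntegral_eq_zero hYadapted hYnonneg hYcont
      hFint hFmono hFcont hMinf_int fun q n htq hqn => ?_
    have hsq := ℱ.mono htq.le _ hs
    rw [integral_add hMinf_int.integrableOn (hFint q).integrableOn,
      hM.setIntegral_eq_of_tendsto_L1 hMinf_int hML1
        ((ℱ.mono hqn _ hsq).inter (measurableSet_hitsZero hYadapted hqn)),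
      ← integral_add (hM.integrable n).integrableOn (hFint q).integrableOn]
    exact setIntegral_hitsZero_eq_zero hYadapted hYnonneg hYcont hdecomp hM hFadapted hFint
      hFmono hFcont hFflat hqn hsq
  refine ae_eq_condExp_of_ae_eq_sub hM hMinf_int hML1 (hYadapted t) (hdecomp t) (hFint t)
    (hS univ .univ).1 (fun s hs => (hS s hs).2) ?_
  have hne : ∀ᵐ ω ∂P, Minf ω + Finf ω ≠ 0 := ae_iff.2 (by simpa using hYinf)
  filter_upwards [hYnonneg, hMas, hFpath, hν, hcarried, hne] with ω hnn hMlim hF hνω hcar hne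
  have hσ : σ ω ≤ t ↔ ω ∉ S := by
    rw [hσdef, sSup_zeros_le_iff ((hMlim.add hF.2.2.2).congr fun u => (hdecomp u ω).symm) hne]
    simp [S]
  by_cases hω : ω ∈ S
  · simp [hω, hσ]
  · have hFt : Finf ω = F t ω := eq_of_tendsto_of_pos_on_Ioi_of_measure_pos_eq_zero hνω.1 hF.1
      hcar hF.2.2.2 fun v hv => (hnn v).lt_of_ne fun h => hω ⟨v, hv, h.symm⟩
    simp [hω, hσ, hFt]

/-- Let `Y = M + F` be a nonnegative continuous `(ℱ t)`-adapted
process, where `M` is an `(ℱ t)`-martingale with `M 0 = 0` converging a.s. and in `L¹`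
to `M_∞`, and `F` is adapted with continuous nondecreasing paths, `F 0 = 0` and
integrable limit `F_∞`.  Assume `P(Y_∞ = 0) = 0` (with `Y_∞ := M_∞ + F_∞`) and that the
Lebesgue–Stieltjes measure `dF` (encoded by the kernel `ν`) is a.s. carried by the zero
set of `Y`.  With `σ := sup{t ≥ 0 : Y t = 0}`, for every `t ≥ 0` one has, `P`-a.s.,
`Y t = E^P[Y_∞ · 1_{σ ≤ t} | ℱ t]`, i.e. `Y` is a relative martingale associated
with `σ`. -/
theorem stmt_17 {Ω : Type*} {m : MeasurableSpace Ω}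
    (P : Measure Ω) [IsProbabilityMeasure P]
    (ℱ : Filtration NNReal m)
    (Y M F : NNReal → Ω → ℝ)
    (Minf Finf : Ω → ℝ)
    (hYadapted : ∀ t : NNReal, StronglyMeasurable[ℱ t] (Y t))
    (hYnonneg : ∀ᵐ ω ∂P, ∀ t, 0 ≤ Y t ω)
    (hYcont : ∀ᵐ ω ∂P, Continuous fun t => Y t ω)
    (hdecomp : ∀ t ω, Y t ω = M t ω + F t ω)
    (hM : Martingale M ℱ P)
    (hM0 : ∀ᵐ ω ∂P, M 0 ω = 0)
    (hMinf_int : Integrable Minf P)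
    (hMas : ∀ᵐ ω ∂P, Tendsto (fun t => M t ω) atTop (nhds (Minf ω)))
    (hML1 : Tendsto (fun t => ∫ ω, |M t ω - Minf ω| ∂P) atTop (nhds 0))
    (hFadapted : ∀ t : NNReal, StronglyMeasurable[ℱ t] (F t))
    (hFpath : ∀ᵐ ω ∂P, Monotone (fun t => F t ω) ∧ Continuous (fun t => F t ω) ∧
      F 0 ω = 0 ∧ Tendsto (fun t => F t ω) atTop (nhds (Finf ω)))
    (hFinf_int : Integrable Finf P)
    (hYinf : P {ω | Minf ω + Finf ω = 0} = 0)
    (ν : Ω → Measure NNReal)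
    (hν : ∀ᵐ ω ∂P, (∀ a b : NNReal, a ≤ b →
        ν ω (Set.Ioc a b) = ENNReal.ofReal (F b ω - F a ω)) ∧
      ν ω {0} = 0 ∧ ν ω Set.univ = ENNReal.ofReal (Finf ω))
    (hcarried : ∀ᵐ ω ∂P, ν ω {u | 0 < Y u ω} = 0)
    (σ : Ω → NNReal)
    (hσdef : ∀ ω, σ ω = sSup {t : NNReal | Y t ω = 0})
    (t : NNReal) :
    Y t =ᵐ[P]
      P[fun ω => (Minf ω + Finf ω) *
        Set.indicator {ω' | σ ω' ≤ t} (fun _ => (1 : ℝ)) ω | ℱ t] :=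
  stmt_17_general P ℱ Y M F Minf Finf hYadapted hYnonneg hYcont hdecomp hM hMinf_int hMas hML1
    hFadapted hFpath hFinf_int hYinf ν hν hcarried σ hσdef t
end
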